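/- arXiv:1712.03208 — 11 statements merged into one kernel-verified Lean document; each statement's English description precedes it below -/
import Mathlib

section
/- Let H be a k-uniform hypergraph on n vertices with complementary hypergraph R, t = n-k, s = r-k with k < r < n. For a k-set S of V(H) that is not an edge of H, there is a bijection between completions of S in H (s-sets T disjoint from S such that every k-subset of S ∪ T other than S is an edge of H) and (t-s)-subsets of V(H)∖S that are contained in exactly one edge of R. -/
open Finset

theorem stmt1 (n k r : ℕ) (hkr : k < r) (hrn : r < n)
    (E : Finset (Finset (Fin n))) (hunif : ∀ e ∈ E, e.card = k)
    (S : Finset (Fin n)) (hS : S.card = k) (hSE : S ∉ E) :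
    Nonempty (
      {T : Finset (Fin n) // T.card = r - k ∧ Disjoint S T ∧
        ∀ U ⊆ S ∪ T, U.card = k → U ≠ S → U ∈ E} ≃
      {W : Finset (Fin n) // W.card = (n - k) - (r - k) ∧ W ⊆ Sᶜ ∧
        ∃! S' : Finset (Fin n), S'.card = k ∧ S' ∉ E ∧ W ⊆ S'ᶜ}) := by
  constructor
  refine
    { toFun := fun T => ⟨(S ∪ T.1)ᶜ, ?_, ?_, ?_⟩
      invFun := fun W => ⟨(S ∪ W.1)ᶜ, ?_, ?_, ?_⟩
      left_inv := ?_
      right_inv := ?_ }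
  · obtain ⟨hTc, hdisj, hcomp⟩ := T.2
    rw [card_compl, Fintype.card_fin, card_union_of_disjoint hdisj, hS, hTc]
    omega
  · exact compl_subset_compl.mpr subset_union_left
  · refine ⟨S, ⟨hS, hSE, compl_subset_compl.mpr subset_union_left⟩, ?_⟩
    rintro S' ⟨hc, hne, hsub⟩
    by_contra hne'
    have hsub' : S' ⊆ S ∪ T.1 := by
      intro a ha
      by_contra hna
      exact (mem_compl.mp (hsub (mem_compl.mpr hna))) ha
    exact hne (T.2.2.2 S' hsub' hc hne')
  · obtain ⟨hWc, hWS, hEx⟩ := W.2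
    have hd : Disjoint S W.1 :=
      disjoint_left.mpr fun a ha hb => (mem_compl.mp (hWS hb)) ha
    rw [card_compl, Fintype.card_fin, card_union_of_disjoint hd, hS, hWc]
    omega
  · exact disjoint_left.mpr fun a ha hb => (mem_compl.mp hb) (mem_union_left _ ha)
  · obtain ⟨hWc, hWS, S₀, hS₀, huniq⟩ := W.2
    intro U hU hUc hUne
    by_contra hUE
    apply hUne
    have hWU : W.1 ⊆ Uᶜ := by
      intro a ha
      refine mem_compl.mpr fun haU => ?_
      have := hU haU
      simp only [mem_union, mem_compl] at this
      rcases this with h | h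
      · exact (mem_compl.mp (hWS ha)) h
      · exact h (Or.inr ha)
    have h1 : U = S₀ := huniq U ⟨hUc, hUE, hWU⟩
    have h2 : S = S₀ := huniq S ⟨hS, hSE, hWS⟩
    rw [h1, h2]
  · rintro ⟨T, hTc, hdisj, hcomp⟩
    apply Subtype.ext
    simp only
    ext a
    have : a ∈ S → a ∉ T := fun h => disjoint_left.mp hdisj h
    simp only [mem_compl, mem_union, not_or, not_not, not_and]
    tauto
  · rintro ⟨W, hWc, hWS, hEx⟩
    apply Subtype.ext
    simp only
    ext a
    have : a ∈ W → a ∉ S := fun h => mem_compl.mp (hWS h)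
    simp only [mem_compl, mem_union, not_or, not_not, not_and]
    tauto
end

section
/- Let k,r,n be integers with 2 ≤ k < r < n, t = n-k, s = r-k. A k-uniform hypergraph H on n vertices is primitive uniquely K_r^(k)-saturated if and only if its complementary hypergraph R satisfies: (1) every (t-s)-subset of V is contained in some edge of R; (2) every edge of R contains exactly one (t-s)-subset contained in no other edge of R; (3) no vertex belongs to all edges of R. -/
open Finset

/-- The edge set `E` is `k`-uniform. -/
def Uniform (n k : ℕ) (E : Finset (Finset (Fin n))) : Prop :=
  ∀ e ∈ E, e.card = k

/-- `H` contains a copy of the complete `k`-uniform hypergraph on `r` vertices. -/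
def HasClique (n k r : ℕ) (E : Finset (Finset (Fin n))) : Prop :=
  ∃ Q : Finset (Fin n), Q.card = r ∧ ∀ T ⊆ Q, T.card = k → T ∈ E

/-- `H` is uniquely `K_r^(k)`-saturated: it has no `K_r^(k)`, and adding any
non-edge `k`-set `S` creates exactly one copy of `K_r^(k)`. -/
def UniquelySat (n k r : ℕ) (E : Finset (Finset (Fin n))) : Prop :=
  ¬ HasClique n k r E ∧
  ∀ S : Finset (Fin n), S.card = k → S ∉ E →
    ∃! Q : Finset (Fin n), Q.card = r ∧ ∀ T ⊆ Q, T.card = k → (T ∈ E ∨ T = S)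

/-- `H` has no dominating vertex. -/
def Primitive (n k : ℕ) (E : Finset (Finset (Fin n))) : Prop :=
  ¬ ∃ v : Fin n, ∀ S : Finset (Fin n), S.card = k → v ∈ S → S ∈ E

/-- `H` is a primitive uniquely `K_r^(k)`-saturated `k`-uniform hypergraph. -/
def IsPUS (n k r : ℕ) (E : Finset (Finset (Fin n))) : Prop :=
  Uniform n k E ∧ UniquelySat n k r E ∧ Primitive n k E

lemma subc {n : ℕ} {s t : Finset (Fin n)} (h : s ⊆ tᶜ) : t ⊆ sᶜ :=
  fun x hx => Finset.mem_compl.mpr (fun hxs => Finset.mem_compl.mp (h hxs) hx)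

lemma cardc {n : ℕ} (s : Finset (Fin n)) : sᶜ.card = n - s.card := by
  simp [Finset.card_compl]

theorem stmt3 (n k r : ℕ) (hk : 2 ≤ k) (hkr : k < r) (hrn : r < n)
    (E : Finset (Finset (Fin n))) (hunif : Uniform n k E) :
    IsPUS n k r E ↔
    ((∀ W : Finset (Fin n), W.card = (n - k) - (r - k) →
        ∃ S : Finset (Fin n), S.card = k ∧ S ∉ E ∧ W ⊆ Sᶜ) ∧
     (∀ S : Finset (Fin n), S.card = k → S ∉ E →
        ∃! W : Finset (Fin n), W.card = (n - k) - (r - k) ∧ W ⊆ Sᶜ ∧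
          ∀ S' : Finset (Fin n), S'.card = k → S' ∉ E → W ⊆ S'ᶜ → S' = S) ∧
     (¬ ∃ v : Fin n, ∀ S : Finset (Fin n), S.card = k → S ∉ E → v ∈ Sᶜ)) := by
  have hnr : (n - k) - (r - k) = n - r := by omega
  -- translation of the clique condition
  have key : ∀ S : Finset (Fin n), S.card = k → S ∉ E → ¬ HasClique n k r E →
      ∀ Q : Finset (Fin n),
        ((Q.card = r ∧ ∀ T ⊆ Q, T.card = k → (T ∈ E ∨ T = S)) ↔
         (Qᶜ.card = (n - k) - (r - k) ∧ Qᶜ ⊆ Sᶜ ∧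
           ∀ S' : Finset (Fin n), S'.card = k → S' ∉ E → Qᶜ ⊆ S'ᶜ → S' = S)) := by
    intro S hSk hSE hnc Q
    constructor
    · rintro ⟨hQr, hQ⟩
      have hSQ : S ⊆ Q := by
        by_contra hSQ
        apply hnc
        refine ⟨Q, hQr, fun T hT hTk => ?_⟩
        rcases hQ T hT hTk with h | h
        · exact h
        · exact absurd (h ▸ hT) hSQ
      refine ⟨by rw [cardc, hQr, hnr], compl_subset_compl.mpr hSQ, ?_⟩
      intro S' hS'k hS'E hWS'
      rcases hQ S' (compl_subset_compl.mp hWS') hS'k with h | h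
      · exact absurd h hS'E
      · exact h
    · rintro ⟨hWc, hWS, huniq'⟩
      have hQn : Q.card ≤ n := by
        have := Finset.card_le_univ Q
        simpa using this
      have hQr : Q.card = r := by
        rw [cardc] at hWc; omega
      refine ⟨hQr, fun T hT hTk => ?_⟩
      by_cases hTE : T ∈ E
      · exact Or.inl hTE
      · exact Or.inr (huniq' T hTk hTE (compl_subset_compl.mpr hT))
  have c1 : (∀ W : Finset (Fin n), W.card = (n - k) - (r - k) →
      ∃ S : Finset (Fin n), S.card = k ∧ S ∉ E ∧ W ⊆ Sᶜ) ↔ ¬ HasClique n k r E := by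
    constructor
    · rintro h ⟨Q, hQr, hQ⟩
      obtain ⟨S, hSk, hSE, hWS⟩ := h Qᶜ (by rw [cardc, hQr, hnr])
      exact hSE (hQ S (by simpa using subc hWS) hSk)
    · intro hnc W hW
      have hWn : W.card ≤ n := by
        have := Finset.card_le_univ W
        simpa using this
      have hQr : Wᶜ.card = r := by rw [cardc]; omega
      by_contra hcon
      push_neg at hcon
      apply hnc
      refine ⟨Wᶜ, hQr, fun T hT hTk => ?_⟩
      by_contra hTE
      exact hcon T hTk hTE (subc hT)
  have c3 : Primitive n k E ↔
      ¬ ∃ v : Fin n, ∀ S : Finset (Fin n), S.card = k → S ∉ E → v ∈ Sᶜ := by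
    unfold Primitive
    constructor
    · rintro h ⟨v, hv⟩
      refine h ⟨v, fun S hSk hvS => ?_⟩
      by_contra hSE
      exact Finset.mem_compl.mp (hv S hSk hSE) hvS
    · rintro h ⟨v, hv⟩
      refine h ⟨v, fun S hSk hSE => Finset.mem_compl.mpr (fun hvS => hSE (hv S hSk hvS))⟩
  constructor
  · rintro ⟨hu, ⟨hnc, hus⟩, hp⟩
    refine ⟨c1.mpr hnc, ?_, c3.mp hp⟩
    intro S hSk hSE
    obtain ⟨Q, hQ, hQu⟩ := hus S hSk hSE
    refine ⟨Qᶜ, (key S hSk hSE hnc Q).mp hQ, ?_⟩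
    intro W hW
    have h2 : Wᶜ = Q := hQu Wᶜ ((key S hSk hSE hnc Wᶜ).mpr (by rw [compl_compl]; exact hW))
    rw [← h2, compl_compl]
  · rintro ⟨h1, h2, h3⟩
    have hnc := c1.mp h1
    refine ⟨hunif, ⟨hnc, ?_⟩, c3.mpr h3⟩
    intro S hSk hSE
    obtain ⟨W, hW, hWu⟩ := h2 S hSk hSE
    refine ⟨Wᶜ, (key S hSk hSE hnc Wᶜ).mpr (by rw [compl_compl]; exact hW), ?_⟩
    intro Q hQ
    have h4 : Qᶜ = W := hWu Qᶜ ((key S hSk hSE hnc Q).mp hQ)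
    rw [← h4, compl_compl]
end

section
/- For all n ≥ 6 there exists a primitive uniquely K_{n-1}^{(n-2)}-saturated hypergraph on n vertices. Equivalently, for all n ≥ 6 there exists a simple graph on n vertices with no isolated vertices in which every edge has exactly one endpoint of degree 1 and no vertex is an endpoint of every edge (a disjoint union of at least two stars, each with at least two edges). -/
open Finset

/-!
An `(n - 2)`-set of an `n`-set is the complement of a pair, so an `(n - 2)`-uniform
hypergraph `H` is encoded by the graph `G` whose edges are the pairs whose complement is not
in `H`. The `(n - 1)`-sets are the complements `{u}ᶜ`, and `{u}ᶜ` spans a clique of `H` exactly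
when `u` is isolated in `G`. If `G` has no isolated vertex, adding the missing edge `{a, b}ᶜ`
makes `{u}ᶜ` a clique exactly when `u ∈ {a, b}` and `u` has degree `1`, so this clique is
unique iff exactly one of `a, b` is a leaf. Finally a vertex dominates `H` iff it lies on
every edge of `G`. Two stars, with centres `0` and `3` and leaves `{1, 2}` and
`{4, …, n - 1}`, have all three properties once `n ≥ 6`.
-/

namespace Finset

variable {α : Type*} [Fintype α] [DecidableEq α]

lemma exists_eq_compl_singleton_of_card_eq (hα : 1 ≤ Fintype.card α) {Q : Finset α}
    (hQ : #Q = Fintype.card α - 1) : ∃ u, Q = {u}ᶜ := by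
  obtain ⟨u, hu⟩ := card_eq_one.mp (show #Qᶜ = 1 by rw [card_compl, hQ]; omega)
  exact ⟨u, by rw [← hu, compl_compl]⟩

lemma existsUnique_card_eq_sub_one_iff (hα : 1 ≤ Fintype.card α) {P : Finset α → Prop} :
    (∃! Q, #Q = Fintype.card α - 1 ∧ P Q) ↔ ∃! u, P {u}ᶜ := by
  have card_compl_singleton (u : α) : #({u}ᶜ : Finset α) = Fintype.card α - 1 := by
    rw [card_compl, card_singleton]
  constructor
  · rintro ⟨Q, ⟨hQ, hPQ⟩, hQ_unique⟩
    obtain ⟨u, rfl⟩ := exists_eq_compl_singleton_of_card_eq hα hQ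
    refine ⟨u, hPQ, fun v hv => ?_⟩
    simpa using hQ_unique _ ⟨card_compl_singleton v, hv⟩
  · rintro ⟨u, hPu, hu_unique⟩
    refine ⟨{u}ᶜ, ⟨card_compl_singleton u, hPu⟩, fun Q ⟨hQ, hPQ⟩ => ?_⟩
    obtain ⟨v, rfl⟩ := exists_eq_compl_singleton_of_card_eq hα hQ
    rw [hu_unique v hPQ]

lemma forall_subset_compl_singleton_card_eq_sub_two_iff (hα : 2 ≤ Fintype.card α) {u : α}
    {P : Finset α → Prop} :
    (∀ T ⊆ {u}ᶜ, #T = Fintype.card α - 2 → P T) ↔ ∀ w ≠ u, P {u, w}ᶜ := by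
  constructor
  · intro h w hw
    exact h _ (by simp) (by rw [card_compl, card_pair hw.symm])
  · intro h T hTu hT
    rw [subset_compl_singleton] at hTu
    obtain ⟨a, b, hab, hTab⟩ := card_eq_two.mp (show #Tᶜ = 2 by rw [card_compl, hT]; omega)
    have hu : u ∈ ({a, b} : Finset α) := hTab ▸ mem_compl.mpr hTu
    rw [← compl_compl T, hTab]
    rcases mem_insert.mp hu with rfl | hub
    · exact h b hab.symm
    · obtain rfl := mem_singleton.mp hub
      rw [pair_comm]
      exact h a hab

end Finset

lemma existsUnique_eq_and_or_eq_and {α : Sort*} {a b : α} {p q : Prop} (hab : a ≠ b)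
    (hpq : p ↔ ¬ q) : ∃! u, (u = a ∧ p) ∨ (u = b ∧ q) := by
  by_cases hp : p
  · refine ⟨a, .inl ⟨rfl, hp⟩, ?_⟩
    rintro u (⟨rfl, -⟩ | ⟨-, hq⟩)
    exacts [rfl, absurd hq (hpq.mp hp)]
  · refine ⟨b, .inr ⟨rfl, not_not.mp (hpq.not.mp hp)⟩, ?_⟩
    rintro u (⟨-, hp'⟩ | ⟨rfl, -⟩)
    exacts [absurd hp' hp, rfl]

namespace SimpleGraph

lemma forall_adj_pair_eq_iff {V : Type*} [DecidableEq V] {G : SimpleGraph V} {a b u : V}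
    (hab : G.Adj a b) (hu : ∃ w, G.Adj u w) :
    (∀ w, G.Adj u w → ({u, w} : Finset V) = {a, b}) ↔
      (u = a ∧ ∃! w, G.Adj a w) ∨ (u = b ∧ ∃! w, G.Adj b w) := by
  have mem_of_pair_eq {x y : V} (h : ({x, y} : Finset V) = {a, b}) : y = a ∨ y = b := by
    have hy : y ∈ ({a, b} : Finset V) := by simp [← h]
    simpa using hy
  constructor
  · intro h
    obtain ⟨w, huw⟩ := hu
    have hu_ab : u ∈ ({a, b} : Finset V) := by simp [← h w huw]
    rw [Finset.mem_insert, Finset.mem_singleton] at hu_ab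
    rcases hu_ab with rfl | rfl
    · refine .inl ⟨rfl, b, hab, fun w hw => ?_⟩
      exact (mem_of_pair_eq (h w hw)).resolve_left hw.ne'
    · refine .inr ⟨rfl, a, hab.symm, fun w hw => ?_⟩
      exact (mem_of_pair_eq (h w hw)).resolve_right hw.ne'
  · rintro (⟨rfl, x, -, hx⟩ | ⟨rfl, x, -, hx⟩) w hw
    · rw [hx w hw, hx b hab]
    · rw [hx w hw, hx a hab.symm, Finset.pair_comm]

end SimpleGraph

section ComplHypergraph

variable {n : ℕ} (G : SimpleGraph (Fin n)) [DecidableRel G.Adj]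

def complHypergraph : Finset (Finset (Fin n)) :=
  {S ∈ univ.powersetCard (n - 2) | ∀ a ∉ S, ∀ b ∉ S, ¬ G.Adj a b}

variable {G}

lemma mem_complHypergraph {S : Finset (Fin n)} :
    S ∈ complHypergraph G ↔ #S = n - 2 ∧ ∀ a ∉ S, ∀ b ∉ S, ¬ G.Adj a b := by
  simp [complHypergraph]

lemma compl_pair_mem_complHypergraph_iff {a b : Fin n} (hab : a ≠ b) :
    {a, b}ᶜ ∈ complHypergraph G ↔ ¬ G.Adj a b := by
  rw [mem_complHypergraph, card_compl, Fintype.card_fin, card_pair hab]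
  simp only [notMem_compl, mem_insert, mem_singleton, forall_eq_or_imp, forall_eq, G.irrefl]
  simp [G.adj_comm b a]

lemma exists_adj_eq_compl_pair_of_notMem_complHypergraph {S : Finset (Fin n)}
    (hS : #S = n - 2) (hSG : S ∉ complHypergraph G) : ∃ a b, G.Adj a b ∧ S = {a, b}ᶜ := by
  simp only [mem_complHypergraph, hS, true_and, not_forall, not_not] at hSG
  obtain ⟨a, ha, b, hb, hab⟩ := hSG
  refine ⟨a, b, hab, ?_⟩
  have hn : 2 ≤ n := by simpa [card_pair hab.ne] using card_le_univ ({a, b} : Finset (Fin n))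
  have h : ({a, b} : Finset (Fin n)) = Sᶜ :=
    eq_of_subset_of_card_le (by simp [insert_subset_iff, ha, hb])
      (by rw [card_compl, Fintype.card_fin, hS, card_pair hab.ne]; omega)
  rw [h, compl_compl]

lemma not_hasClique_complHypergraph (hn : 2 ≤ n) (hG : ∀ v, ∃ w, G.Adj v w) :
    ¬ HasClique n (n - 2) (n - 1) (complHypergraph G) := by
  rintro ⟨Q, hQ, hQG⟩
  obtain ⟨u, rfl⟩ := exists_eq_compl_singleton_of_card_eq (α := Fin n) (by simp; omega)
    (by simpa using hQ)
  have key := forall_subset_compl_singleton_card_eq_sub_two_iff (α := Fin n) (u := u)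
    (P := (· ∈ complHypergraph G)) (by simpa using hn)
  rw [Fintype.card_fin] at key
  obtain ⟨w, huw⟩ := hG u
  exact (compl_pair_mem_complHypergraph_iff huw.ne).mp (key.mp hQG w huw.ne') huw

lemma forall_subset_compl_singleton_mem_or_eq_compl_pair_iff (hn : 2 ≤ n) {a b u : Fin n} :
    (∀ T ⊆ {u}ᶜ, #T = n - 2 → T ∈ complHypergraph G ∨ T = {a, b}ᶜ) ↔
      ∀ w, G.Adj u w → ({u, w} : Finset (Fin n)) = {a, b} := by
  have key := forall_subset_compl_singleton_card_eq_sub_two_iff (α := Fin n) (u := u)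
    (P := fun T => T ∈ complHypergraph G ∨ T = {a, b}ᶜ) (by simpa using hn)
  rw [Fintype.card_fin] at key
  refine key.trans (forall_congr' fun w => ?_)
  by_cases hw : w = u
  · simp [hw]
  · rw [compl_pair_mem_complHypergraph_iff (Ne.symm hw), compl_inj_iff]
    tauto

lemma uniquelySat_complHypergraph (hn : 2 ≤ n) (hG₁ : ∀ v, ∃ w, G.Adj v w)
    (hG₂ : ∀ v w, G.Adj v w → ((∃! u, G.Adj v u) ↔ ¬ ∃! u, G.Adj w u)) :
    UniquelySat n (n - 2) (n - 1) (complHypergraph G) := by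
  refine ⟨not_hasClique_complHypergraph hn hG₁, fun S hS hSG => ?_⟩
  obtain ⟨a, b, hab, rfl⟩ := exists_adj_eq_compl_pair_of_notMem_complHypergraph hS hSG
  have key := existsUnique_card_eq_sub_one_iff (α := Fin n) (by simp; omega)
    (P := fun Q => ∀ T ⊆ Q, #T = n - 2 → T ∈ complHypergraph G ∨ T = {a, b}ᶜ)
  rw [Fintype.card_fin] at key
  refine key.mpr ((existsUnique_congr fun u => ?_).mpr
    (existsUnique_eq_and_or_eq_and hab.ne (hG₂ a b hab)))
  exact (forall_subset_compl_singleton_mem_or_eq_compl_pair_iff hn).trans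
    (G.forall_adj_pair_eq_iff hab (hG₁ u))

lemma primitive_complHypergraph (hG : ¬ ∃ v, ∀ e ∈ G.edgeSet, v ∈ e) :
    Primitive n (n - 2) (complHypergraph G) := by
  rintro ⟨v, hv⟩
  refine hG ⟨v, fun e he => ?_⟩
  induction e using Sym2.ind with
  | _ a b =>
    by_contra hv_ab
    rw [Sym2.mem_iff, not_or] at hv_ab
    have hmem := hv {a, b}ᶜ (by rw [card_compl, Fintype.card_fin, card_pair he.ne])
      (by simp [hv_ab.1, hv_ab.2])
    exact (compl_pair_mem_complHypergraph_iff he.ne).mp hmem he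

theorem isPUS_complHypergraph (hn : 2 ≤ n) (hG₁ : ∀ v, ∃ w, G.Adj v w)
    (hG₂ : ∀ v w, G.Adj v w → ((∃! u, G.Adj v u) ↔ ¬ ∃! u, G.Adj w u))
    (hG₃ : ¬ ∃ v, ∀ e ∈ G.edgeSet, v ∈ e) :
    IsPUS n (n - 2) (n - 1) (complHypergraph G) :=
  ⟨fun _ hS => (mem_complHypergraph.mp hS).1, uniquelySat_complHypergraph hn hG₁ hG₂,
    primitive_complHypergraph hG₃⟩

end ComplHypergraph

def starCentre (x : ℕ) : ℕ := if x < 3 then 0 else 3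

lemma starCentre_cases (x : ℕ) : x < 3 ∧ starCentre x = 0 ∨ 3 ≤ x ∧ starCentre x = 3 := by
  unfold starCentre
  split_ifs <;> omega

def twoStars (n : ℕ) : SimpleGraph (Fin n) :=
  SimpleGraph.fromRel fun x y => x.val = starCentre y.val

section TwoStars

variable {n : ℕ}

lemma twoStars_adj {x y : Fin n} :
    (twoStars n).Adj x y ↔ x.val ≠ y.val ∧ (x.val = starCentre y ∨ y.val = starCentre x) := by
  simp [twoStars, Fin.val_ne_iff]

lemma twoStars_exists_adj (hn : 6 ≤ n) (v : Fin n) : ∃ w, (twoStars n).Adj v w := by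
  have hv := starCentre_cases v
  by_cases hc : starCentre v = v
  · have := starCentre_cases (v + 1)
    exact ⟨⟨v + 1, by omega⟩, twoStars_adj.mpr (by dsimp only; omega)⟩
  · have := starCentre_cases (starCentre v)
    exact ⟨⟨starCentre v, by omega⟩, twoStars_adj.mpr (by dsimp only; omega)⟩

lemma twoStars_existsUnique_adj_iff (hn : 6 ≤ n) (v : Fin n) :
    (∃! w, (twoStars n).Adj v w) ↔ starCentre v ≠ v := by
  have hv := starCentre_cases v
  constructor
  · rintro ⟨w, -, hw⟩ hc
    have := starCentre_cases (v + 1)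
    have := starCentre_cases (v + 2)
    have h₁ := hw ⟨v + 1, by omega⟩ (twoStars_adj.mpr (by dsimp only; omega))
    have h₂ := hw ⟨v + 2, by omega⟩ (twoStars_adj.mpr (by dsimp only; omega))
    have := congrArg Fin.val (h₁.trans h₂.symm)
    simp at this
  · intro hc
    have := starCentre_cases (starCentre v)
    refine ⟨⟨starCentre v, by omega⟩, twoStars_adj.mpr (by dsimp only; omega),
      fun w (hw : (twoStars n).Adj v w) => ?_⟩
    have := starCentre_cases w
    rw [twoStars_adj] at hw
    ext
    dsimp only
    omega

lemma twoStars_existsUnique_adj_iff_not (hn : 6 ≤ n) {v w : Fin n} (h : (twoStars n).Adj v w) :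
    (∃! u, (twoStars n).Adj v u) ↔ ¬ ∃! u, (twoStars n).Adj w u := by
  rw [twoStars_existsUnique_adj_iff hn, twoStars_existsUnique_adj_iff hn]
  have := starCentre_cases v
  have := starCentre_cases w
  rw [twoStars_adj] at h
  omega

lemma twoStars_not_exists_mem_all_edges (hn : 6 ≤ n) :
    ¬ ∃ v, ∀ e ∈ (twoStars n).edgeSet, v ∈ e := by
  rintro ⟨v, hv⟩
  have h₁ := hv s(⟨0, by omega⟩, ⟨1, by omega⟩) (twoStars_adj.mpr (by simp [starCentre]))
  have h₂ := hv s(⟨3, by omega⟩, ⟨4, by omega⟩) (twoStars_adj.mpr (by simp [starCentre]))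
  simp only [Sym2.mem_iff, Fin.ext_iff] at h₁ h₂
  omega

end TwoStars

theorem stmt4 (n : ℕ) (hn : 6 ≤ n) :
    (∃ E : Finset (Finset (Fin n)), IsPUS n (n - 2) (n - 1) E) ∧
    (∃ G : SimpleGraph (Fin n),
      (∀ v : Fin n, ∃ w, G.Adj v w) ∧
      (∀ v w : Fin n, G.Adj v w → ((∃! u, G.Adj v u) ↔ ¬ (∃! u, G.Adj w u))) ∧
      (¬ ∃ v : Fin n, ∀ e ∈ G.edgeSet, v ∈ e)) := by
  classical
  have hG₁ := twoStars_exists_adj hn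
  have hG₂ : ∀ v w, (twoStars n).Adj v w → _ := fun _ _ => twoStars_existsUnique_adj_iff_not hn
  have hG₃ := twoStars_not_exists_mem_all_edges hn
  exact ⟨⟨_, isPUS_complHypergraph (by omega) hG₁ hG₂ hG₃⟩, twoStars n, hG₁, hG₂, hG₃⟩
end

section
/- Let k ≥ 4 and let r satisfy k < r ≤ 2k-3. Then for every n > r there exists a primitive uniquely K_r^(k)-saturated hypergraph on n vertices. -/
/-! Fix pairwise disjoint vertex sets `C`, `P`, `Z` with `|Z| = |C|` and `|P| ≥ 2`, put
`k = |C| + |P| + 1` and `r = k + |C|`, and let the non-edges be the `k`-sets that avoid `C` and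
miss a vertex of `P` ("basic"), together with the sets `C ∪ P ∪ {x}` for `x ∉ C ∪ P ∪ Z`
("extra"). Every `r`-set contains a non-edge, so there is no `K_r`. If an `r`-set `Q` becomes
complete after adding the non-edge `S`, then `S ⊆ Q`, and a vertex of `Q \ S` outside `C`
(for basic `S`) or outside `Z` (for extra `S`) would produce a second non-edge inside `Q`;
hence `Q` is `S ∪ C` or `S ∪ Z`, and these do work. Every vertex lies in a non-edge, which
gives primitivity. -/

open Finset

namespace UniqueSat

section FinsetLemmas

variable {α : Type*} [DecidableEq α]

theorem exists_subset_card_eq_mem_not_subset {A P : Finset α} {a : α} {k : ℕ} (ha : a ∈ A)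
    (hP : 1 < #P) (hk : 0 < k) (hA : k < #A) : ∃ T ⊆ A, #T = k ∧ a ∈ T ∧ ¬ P ⊆ T := by
  obtain ⟨p, hp, hpa⟩ := (one_lt_card_iff_nontrivial.1 hP).exists_ne a
  have hAp : k ≤ #(A.erase p) := by
    have := pred_card_le_card_erase (s := A) (a := p)
    omega
  obtain ⟨T, haT, hTA, hT⟩ := exists_subsuperset_card_eq
    (singleton_subset_iff.2 (mem_erase.2 ⟨hpa.symm, ha⟩)) (by rw [card_singleton]; omega) hAp
  exact ⟨T, hTA.trans (erase_subset p A), hT, singleton_subset_iff.1 haT,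
    fun hPT => notMem_erase p A (hTA (hPT hp))⟩

theorem eq_sdiff_of_disjoint {Q C T : Finset α} (hCQ : C ⊆ Q) (hTQ : T ⊆ Q)
    (hTC : Disjoint T C) (hT : #Q ≤ #T + #C) : T = Q \ C :=
  eq_of_subset_of_card_le (subset_sdiff.2 ⟨hTQ, hTC⟩) (by rw [card_sdiff_of_subset hCQ]; omega)

theorem eq_union_of_sdiff_subset {S Q X : Finset α} (hSQ : S ⊆ Q) (hX : Q \ S ⊆ X)
    (hcard : #S + #X ≤ #Q) : Q = S ∪ X := by
  have hQS : Q \ S = X :=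
    eq_of_subset_of_card_le hX (by rw [card_sdiff_of_subset hSQ]; omega)
  rw [← hQS, union_sdiff_of_subset hSQ]

theorem exists_pairwise_disjoint_card [Fintype α] {a b c : ℕ}
    (h : a + b + c ≤ Fintype.card α) : ∃ C P Z : Finset α,
      Disjoint C P ∧ Disjoint C Z ∧ Disjoint P Z ∧ #C = a ∧ #P = b ∧ #Z = c := by
  obtain ⟨C, -, hC⟩ :=
    exists_subset_card_eq (s := (univ : Finset α)) (n := a) (by rw [card_univ]; omega)
  obtain ⟨P, hPC, hP⟩ := exists_subset_card_eq (s := Cᶜ) (n := b) (by rw [card_compl]; omega)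
  obtain ⟨Z, hZCP, hZ⟩ := exists_subset_card_eq (s := (C ∪ P)ᶜ) (n := c) (by
    rw [card_compl, card_union_of_disjoint (disjoint_right.2 fun _ hx => mem_compl.1 (hPC hx))]
    omega)
  have hCP : Disjoint C P := disjoint_right.2 fun _ hx => mem_compl.1 (hPC hx)
  have hZ' : Disjoint (C ∪ P) Z := disjoint_right.2 fun _ hx => mem_compl.1 (hZCP hx)
  exact ⟨C, P, Z, hCP, disjoint_of_subset_left subset_union_left hZ',
    disjoint_of_subset_left subset_union_right hZ', hC, hP, hZ⟩

end FinsetLemmas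

def IsCompletion {n : ℕ} (k r : ℕ) (E : Finset (Finset (Fin n))) (S Q : Finset (Fin n)) :
    Prop :=
  #Q = r ∧ ∀ T ⊆ Q, #T = k → T ∈ E ∨ T = S

section Construction

variable {n : ℕ} {C P Z : Finset (Fin n)}

variable (C P Z) in
def IsNonEdge (S : Finset (Fin n)) : Prop :=
  (Disjoint S C ∧ ¬ P ⊆ S) ∨ ∃ x ∉ C ∪ P ∪ Z, S = insert x (C ∪ P)

variable (C P Z) in
open Classical in
noncomputable def edges : Finset (Finset (Fin n)) :=
  (powersetCard (#C + #P + 1) univ).filter (fun T => ¬ IsNonEdge C P Z T)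

theorem mem_edges {T : Finset (Fin n)} :
    T ∈ edges C P Z ↔ #T = #C + #P + 1 ∧ ¬ IsNonEdge C P Z T := by
  simp [edges, mem_powersetCard]

theorem isNonEdge_of_notMem_edges {S : Finset (Fin n)} (hS : #S = #C + #P + 1)
    (hSE : S ∉ edges C P Z) : IsNonEdge C P Z S := by
  by_contra h
  exact hSE (mem_edges.2 ⟨hS, h⟩)

theorem eq_of_isNonEdge {S T : Finset (Fin n)} (h : T ∈ edges C P Z ∨ T = S)
    (hT : IsNonEdge C P Z T) : T = S :=
  h.resolve_left fun hE => (mem_edges.1 hE).2 hT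

theorem card_insert_union (hCP : Disjoint C P) {x : Fin n} (hx : x ∉ C ∪ P) :
    #(insert x (C ∪ P)) = #C + #P + 1 := by
  rw [card_insert_of_notMem hx, card_union_of_disjoint hCP]

theorem exists_isNonEdge_subset (hCP : Disjoint C P) (hP : 1 < #P) (hZ : #Z ≤ #C)
    {Q : Finset (Fin n)} (hQ : #Q = #C + #P + 1 + #C) :
    ∃ T ⊆ Q, #T = #C + #P + 1 ∧ IsNonEdge C P Z T := by
  have hA : #C + #P + 1 ≤ #(Q \ C) := by
    have := le_card_sdiff C Q
    omega
  rcases hA.lt_or_eq with hA | hA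
  · obtain ⟨a, ha⟩ : (Q \ C).Nonempty := card_pos.1 (by omega)
    obtain ⟨T, hTA, hT, -, hPT⟩ := exists_subset_card_eq_mem_not_subset ha hP (by omega) hA
    exact ⟨T, hTA.trans sdiff_subset, hT,
      Or.inl ⟨disjoint_of_subset_left hTA sdiff_disjoint, hPT⟩⟩
  by_cases hPA : P ⊆ Q \ C
  swap
  · exact ⟨Q \ C, sdiff_subset, hA.symm, Or.inl ⟨sdiff_disjoint, hPA⟩⟩
  -- `Q \ C` has only `k` elements, so `Q` contains all of `C`
  have hCQ : C ⊆ Q := by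
    have hsplit := card_sdiff_add_card_inter Q C
    rw [← inter_eq_right]
    exact eq_of_subset_of_card_le inter_subset_right (by omega)
  obtain ⟨x, hxA, hxZ⟩ : ∃ x ∈ (Q \ C) \ P, x ∉ Z :=
    exists_mem_notMem_of_card_lt_card (by rw [card_sdiff_of_subset hPA]; omega)
  simp only [mem_sdiff] at hxA
  have hxCP : x ∉ C ∪ P := by simp [hxA.1.2, hxA.2]
  refine ⟨insert x (C ∪ P), insert_subset hxA.1.1 (union_subset hCQ (hPA.trans sdiff_subset)),
    card_insert_union hCP hxCP, Or.inr ⟨x, ?_, rfl⟩⟩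
  simp [hxA.1.2, hxA.2, hxZ]

theorem subset_of_isCompletion (hCP : Disjoint C P) (hP : 1 < #P) (hZ : #Z ≤ #C)
    {S Q : Finset (Fin n)}
    (hQ : IsCompletion (#C + #P + 1) (#C + #P + 1 + #C) (edges C P Z) S Q) : S ⊆ Q := by
  obtain ⟨T, hTQ, hT, hTS⟩ := exists_isNonEdge_subset hCP hP hZ hQ.1
  exact eq_of_isNonEdge (hQ.2 T hTQ hT) hTS ▸ hTQ

theorem isCompletion_union_of_disjoint (hCP : Disjoint C P) {S : Finset (Fin n)}
    (hS : #S = #C + #P + 1) (hSC : Disjoint S C) (hPS : ¬ P ⊆ S) :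
    IsCompletion (#C + #P + 1) (#C + #P + 1 + #C) (edges C P Z) S (S ∪ C) := by
  refine ⟨by rw [card_union_of_disjoint hSC, hS], fun T hTQ hT => ?_⟩
  by_contra! hTE
  rcases isNonEdge_of_notMem_edges hT hTE.1 with ⟨hTC, -⟩ | ⟨y, -, rfl⟩
  · refine hTE.2 ?_
    rw [eq_sdiff_of_disjoint subset_union_right hTQ hTC
      (by rw [card_union_of_disjoint hSC]; omega), union_sdiff_cancel_right hSC]
  · have hPSC : P ⊆ S ∪ C := (subset_union_right.trans (subset_insert y _)).trans hTQ
    exact hPS (hCP.symm.left_le_of_le_sup_right hPSC)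

theorem eq_union_of_isCompletion_of_disjoint (hCP : Disjoint C P) (hP : 1 < #P) (hZ : #Z ≤ #C)
    {S Q : Finset (Fin n)} (hS : #S = #C + #P + 1) (hSC : Disjoint S C)
    (hQ : IsCompletion (#C + #P + 1) (#C + #P + 1 + #C) (edges C P Z) S Q) : Q = S ∪ C := by
  have hSQ := subset_of_isCompletion hCP hP hZ hQ
  refine eq_union_of_sdiff_subset hSQ (fun y hy => ?_) (by rw [hQ.1, hS])
  by_contra hyC
  rw [mem_sdiff] at hy
  have hlt : #C + #P + 1 < #(Q \ C) := by
    have hsub : insert y S ⊆ Q \ C :=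
      insert_subset (mem_sdiff.2 ⟨hy.1, hyC⟩) (subset_sdiff.2 ⟨hSQ, hSC⟩)
    have := card_le_card hsub
    rw [card_insert_of_notMem hy.2] at this
    omega
  obtain ⟨T, hTA, hT, hyT, hPT⟩ :=
    exists_subset_card_eq_mem_not_subset (mem_sdiff.2 ⟨hy.1, hyC⟩) hP (by omega) hlt
  have hTS := eq_of_isNonEdge (hQ.2 T (hTA.trans sdiff_subset) hT)
    (Or.inl ⟨disjoint_of_subset_left hTA sdiff_disjoint, hPT⟩)
  exact hy.2 (hTS ▸ hyT)

theorem isCompletion_union_of_notMem (hCP : Disjoint C P) (hCZ : Disjoint C Z)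
    (hPZ : Disjoint P Z) (hZ : #Z = #C) {x : Fin n} (hx : x ∉ C ∪ P ∪ Z) :
    IsCompletion (#C + #P + 1) (#C + #P + 1 + #C) (edges C P Z) (insert x (C ∪ P))
      (insert x (C ∪ P) ∪ Z) := by
  have hxCP : x ∉ C ∪ P := fun h => hx (mem_union_left Z h)
  have hSZ : Disjoint (insert x (C ∪ P)) Z :=
    disjoint_insert_left.2
      ⟨fun h => hx (mem_union_right _ h), disjoint_union_left.2 ⟨hCZ, hPZ⟩⟩
  have hQ : #(insert x (C ∪ P) ∪ Z) = #C + #P + 1 + #C := by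
    rw [card_union_of_disjoint hSZ, card_insert_union hCP hxCP, hZ]
  refine ⟨hQ, fun T hTQ hT => ?_⟩
  by_contra! hTE
  rcases isNonEdge_of_notMem_edges hT hTE.1 with ⟨hTC, hPT⟩ | ⟨y, hy, rfl⟩
  · have hCQ : C ⊆ insert x (C ∪ P) ∪ Z :=
      subset_union_left.trans ((subset_insert x _).trans subset_union_left)
    have hPQ : P ⊆ insert x (C ∪ P) ∪ Z :=
      subset_union_right.trans ((subset_insert x _).trans subset_union_left)
    rw [eq_sdiff_of_disjoint hCQ hTQ hTC (by omega)] at hPT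
    exact hPT (subset_sdiff.2 ⟨hPQ, hCP.symm⟩)
  · have hyx : y = x := by
      have hyQ := hTQ (mem_insert_self y _)
      simp only [mem_union, mem_insert, not_or] at hyQ hy
      tauto
    exact hTE.2 (hyx ▸ rfl)

theorem eq_union_of_isCompletion_of_notMem (hCP : Disjoint C P) (hP : 1 < #P) (hZ : #Z ≤ #C)
    {x : Fin n} (hx : x ∉ C ∪ P ∪ Z) {Q : Finset (Fin n)}
    (hQ : IsCompletion (#C + #P + 1) (#C + #P + 1 + #C) (edges C P Z) (insert x (C ∪ P)) Q) :
    Q = insert x (C ∪ P) ∪ Z := by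
  have hSQ := subset_of_isCompletion hCP hP hZ hQ
  have hxCP : x ∉ C ∪ P := fun h => hx (mem_union_left Z h)
  refine eq_union_of_sdiff_subset hSQ (fun y hy => ?_)
    (by rw [hQ.1, card_insert_union hCP hxCP]; omega)
  by_contra hyZ
  rw [mem_sdiff] at hy
  have hyCP : y ∉ C ∪ P := fun h => hy.2 (mem_insert_of_mem h)
  have hTS := eq_of_isNonEdge
    (hQ.2 (insert y (C ∪ P)) (insert_subset hy.1 ((subset_insert x _).trans hSQ))
      (card_insert_union hCP hyCP))
    (Or.inr ⟨y, mem_union.not.2 (not_or.2 ⟨hyCP, hyZ⟩), rfl⟩)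
  exact hy.2 (hTS ▸ mem_insert_self y _)

theorem primitive_edges (hCP : Disjoint C P) (hP : 1 < #P) (hZ : #Z ≤ #C)
    (hn : #C + #P + 1 + #C < n) :
    Primitive n (#C + #P + 1) (edges C P Z) := by
  rintro ⟨v, hv⟩
  by_cases hvC : v ∈ C
  · obtain ⟨x, -, hx⟩ : ∃ x ∈ (univ : Finset (Fin n)), x ∉ C ∪ P ∪ Z := by
      refine exists_mem_notMem_of_card_lt_card ?_
      have h1 := card_union_le (C ∪ P) Z
      have h2 := card_union_le C P
      rw [card_univ, Fintype.card_fin]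
      omega
    have hxCP : x ∉ C ∪ P := fun h => hx (mem_union_left Z h)
    have hvS : v ∈ insert x (C ∪ P) := mem_insert_of_mem (mem_union_left P hvC)
    exact (mem_edges.1 (hv _ (card_insert_union hCP hxCP) hvS)).2 (Or.inr ⟨x, hx, rfl⟩)
  · obtain ⟨T, hT, hTcard, hvT, hPT⟩ := exists_subset_card_eq_mem_not_subset
      (k := #C + #P + 1) (mem_sdiff.2 ⟨mem_univ v, hvC⟩) hP (by omega)
      (by rw [card_univ_sdiff, Fintype.card_fin]; omega)
    exact (mem_edges.1 (hv T hTcard hvT)).2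
      (Or.inl ⟨disjoint_of_subset_left hT sdiff_disjoint, hPT⟩)

theorem isPUS_edges (hCP : Disjoint C P) (hCZ : Disjoint C Z) (hPZ : Disjoint P Z)
    (hP : 1 < #P) (hZ : #Z = #C) (hn : #C + #P + 1 + #C < n) :
    IsPUS n (#C + #P + 1) (#C + #P + 1 + #C) (edges C P Z) := by
  refine ⟨fun e he => (mem_edges.1 he).1, ⟨?_, fun S hS hSE => ?_⟩,
    primitive_edges hCP hP hZ.le hn⟩
  · rintro ⟨Q, hQ, hQE⟩
    obtain ⟨T, hTQ, hT, hTS⟩ := exists_isNonEdge_subset hCP hP hZ.le hQ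
    exact (mem_edges.1 (hQE T hTQ hT)).2 hTS
  rcases isNonEdge_of_notMem_edges hS hSE with ⟨hSC, hPS⟩ | ⟨x, hx, rfl⟩
  · exact ⟨S ∪ C, isCompletion_union_of_disjoint hCP hS hSC hPS,
      fun Q hQ => eq_union_of_isCompletion_of_disjoint hCP hP hZ.le hS hSC hQ⟩
  · exact ⟨_, isCompletion_union_of_notMem hCP hCZ hPZ hZ hx,
      fun Q hQ => eq_union_of_isCompletion_of_notMem hCP hP hZ.le hx hQ⟩

end Construction

end UniqueSat

theorem stmt5_general (k r : ℕ) (hkr : k < r) (hr : r ≤ 2 * k - 3) :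
    ∀ n : ℕ, r < n → ∃ E : Finset (Finset (Fin n)), IsPUS n k r E := by
  intro n hn
  obtain ⟨C, P, Z, hCP, hCZ, hPZ, hC, hP, hZ⟩ := UniqueSat.exists_pairwise_disjoint_card
    (α := Fin n) (a := r - k) (b := 2 * k - 1 - r) (c := r - k) (by rw [Fintype.card_fin]; omega)
  obtain rfl : k = #C + #P + 1 := by omega
  obtain rfl : r = #C + #P + 1 + #C := by omega
  exact ⟨_, UniqueSat.isPUS_edges hCP hCZ hPZ (by omega) (by omega) (by omega)⟩

theorem stmt5 (k r : ℕ) (hk : 4 ≤ k) (hkr : k < r) (hr : r ≤ 2 * k - 3) :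
    ∀ n : ℕ, r < n → ∃ E : Finset (Finset (Fin n)), IsPUS n k r E :=
  stmt5_general k r hkr hr
end

section
/- Let k ≥ 4, k < r ≤ 2k-3, n > r, t = n-k, s = r-k. Define on vertex set [n] the t-uniform hypergraph R with edge set A ∪ B, where A = { [s] ∪ S : S is a (t-s)-subset of {s+1,...,n} containing some element i < n-t } and B = { {n-s+1,...,n} ∪ S : S is a (t-s)-subset of {n-t,...,n-s} }. Then every (t-s)-subset of [n] is contained in some edge of R, every edge of R contains exactly one (t-s)-subset contained in no other edge of R, and no vertex of [n] belongs to all edges of R. -/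
open Finset

private lemma extend_avoid (P F : Finset ℕ) (b m : ℕ) (hFP : F ⊆ P) (hbF : b ∉ F)
    (hFm : F.card ≤ m) (hmP : m + 1 ≤ P.card) :
    ∃ S, F ⊆ S ∧ S ⊆ P ∧ S.card = m ∧ b ∉ S := by
  have hcard : m ≤ (P.erase b).card := by
    by_cases hb : b ∈ P
    · rw [Finset.card_erase_of_mem hb]; omega
    · rw [Finset.erase_eq_of_notMem hb]; omega
  obtain ⟨S, h1, h2, h3⟩ := Finset.exists_subsuperset_card_eq
    (Finset.subset_erase.mpr ⟨hFP, hbF⟩) hFm hcard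
  exact ⟨S, h1, h2.trans (Finset.erase_subset _ _), h3,
    fun hb => (Finset.mem_erase.mp (h2 hb)).1 rfl⟩

private lemma union_cancel (X S₁ S₂ : Finset ℕ) (h1 : ∀ a ∈ S₁, a ∉ X)
    (h2 : ∀ a ∈ S₂, a ∉ X) (h : X ∪ S₁ = X ∪ S₂) : S₁ = S₂ := by
  ext x
  constructor <;> intro hx
  · rcases Finset.mem_union.mp (h ▸ Finset.mem_union_right X hx) with h' | h'
    · exact absurd h' (h1 x hx)
    · exact h'
  · rcases Finset.mem_union.mp (h.symm ▸ Finset.mem_union_right X hx) with h' | h'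
    · exact absurd h' (h2 x hx)
    · exact h'

theorem stmt6 (k r n : ℕ) (hk : 4 ≤ k) (hkr : k < r) (hr : r ≤ 2 * k - 3) (hn : r < n)
    (t s : ℕ) (ht : t = n - k) (hs : s = r - k)
    (A B R : Set (Finset ℕ))
    (hA : A = {e | ∃ S : Finset ℕ, S ⊆ Finset.Icc (s + 1) n ∧ S.card = t - s ∧
      (∃ i ∈ S, i < n - t) ∧ e = Finset.Icc 1 s ∪ S})
    (hB : B = {e | ∃ S : Finset ℕ, S ⊆ Finset.Icc (n - t) (n - s) ∧ S.card = t - s ∧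
      e = Finset.Icc (n - s + 1) n ∪ S})
    (hR : R = A ∪ B) :
    (∀ W : Finset ℕ, W ⊆ Finset.Icc 1 n → W.card = t - s → ∃ e ∈ R, W ⊆ e) ∧
    (∀ e ∈ R, ∃! W : Finset ℕ, W ⊆ e ∧ W.card = t - s ∧ ∀ e' ∈ R, W ⊆ e' → e' = e) ∧
    (¬ ∃ v ∈ Finset.Icc 1 n, ∀ e ∈ R, v ∈ e) := by
  subst hR hA hB
  have cardIccA : (Icc (s + 1) n).card = n - s := by rw [Nat.card_Icc]; omega
  have cardIccB : (Icc (n - t) (n - s)).card = t - s + 1 := by rw [Nat.card_Icc]; omega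
  -- basic arithmetic facts
  have hsk : s + 3 ≤ k := by omega
  have hnt : n - t = k := by omega
  have hts1 : 1 ≤ t - s := by omega
  -- extension inside the A-pool
  have extendA : ∀ (F : Finset ℕ) (b : ℕ), F ⊆ Icc (s + 1) n → F.card ≤ t - s → b ∉ F →
      ∃ S, F ⊆ S ∧ S ⊆ Icc (s + 1) n ∧ S.card = t - s ∧ b ∉ S := by
    intro F b hF hc hb
    exact extend_avoid _ F b (t - s) hF hb hc (by rw [cardIccA]; omega)
  have extendB : ∀ (F : Finset ℕ) (b : ℕ), F ⊆ Icc (n - t) (n - s) → F.card ≤ t - s → b ∉ F →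
      ∃ S, F ⊆ S ∧ S ⊆ Icc (n - t) (n - s) ∧ S.card = t - s ∧ b ∉ S := by
    intro F b hF hc hb
    exact extend_avoid _ F b (t - s) hF hb hc (by rw [cardIccB])
  -- existence of valid A-sets avoiding a fixed set G
  have existsA_ne : ∀ (F G : Finset ℕ), F ⊆ Icc (s + 1) n → F.card < t - s →
      ∃ S, F ⊆ S ∧ S ⊆ Icc (s + 1) n ∧ S.card = t - s ∧ (∃ i ∈ S, i < n - t) ∧ S ≠ G := by
    intro F G hF hc
    by_cases hlow : ∃ i ∈ F, i < n - t
    · have hne : ((Icc (s + 1) n) \ F).Nonempty := by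
        rw [← Finset.card_pos, Finset.card_sdiff_of_subset hF, cardIccA]; omega
      obtain ⟨b, hb⟩ := hne
      rw [Finset.mem_sdiff] at hb
      obtain ⟨S₁, h11, h12, h13, h14⟩ := extendA F b hF (le_of_lt hc) hb.2
      obtain ⟨S₂, h21, h22, h23, h24⟩ := extendA (insert b F) 0
        (Finset.insert_subset hb.1 hF)
        (by rw [Finset.card_insert_of_notMem hb.2]; omega)
        (by
          intro h0
          rcases Finset.mem_insert.mp h0 with h | h
          · have := (Finset.mem_Icc.mp hb.1).1; omega
          · have := (Finset.mem_Icc.mp (hF h)).1; omega)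
      obtain ⟨i, hiF, hik⟩ := hlow
      have hb2 : b ∈ S₂ := h21 (Finset.mem_insert_self _ _)
      have hS12 : S₁ ≠ S₂ := fun h => h14 (h ▸ hb2)
      by_cases hG : S₁ = G
      · exact ⟨S₂, fun x hx => h21 (Finset.mem_insert_of_mem hx), h22, h23,
          ⟨i, h21 (Finset.mem_insert_of_mem hiF), hik⟩, fun h => hS12 (hG.trans h.symm)⟩
      · exact ⟨S₁, h11, h12, h13, ⟨i, h11 hiF, hik⟩, hG⟩
    · have hF1 : s + 1 ∉ F := fun h => hlow ⟨_, h, by omega⟩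
      have hF2 : s + 2 ∉ F := fun h => hlow ⟨_, h, by omega⟩
      obtain ⟨S₁, h11, h12, h13, h14⟩ := extendA (insert (s + 1) F) (s + 2)
        (Finset.insert_subset (Finset.mem_Icc.mpr ⟨le_refl _, by omega⟩) hF)
        (by rw [Finset.card_insert_of_notMem hF1]; omega)
        (by
          intro h0
          rcases Finset.mem_insert.mp h0 with h | h
          · omega
          · exact hF2 h)
      obtain ⟨S₂, h21, h22, h23, h24⟩ := extendA (insert (s + 2) F) 0
        (Finset.insert_subset (Finset.mem_Icc.mpr ⟨by omega, by omega⟩) hF)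
        (by rw [Finset.card_insert_of_notMem hF2]; omega)
        (by
          intro h0
          rcases Finset.mem_insert.mp h0 with h | h
          · omega
          · have := (Finset.mem_Icc.mp (hF h)).1; omega)
      have hb2 : s + 2 ∈ S₂ := h21 (Finset.mem_insert_self _ _)
      have hS12 : S₁ ≠ S₂ := fun h => h14 (h ▸ hb2)
      by_cases hG : S₁ = G
      · exact ⟨S₂, fun x hx => h21 (Finset.mem_insert_of_mem hx), h22, h23,
          ⟨s + 2, hb2, by omega⟩, fun h => hS12 (hG.trans h.symm)⟩
      · exact ⟨S₁, fun x hx => h11 (Finset.mem_insert_of_mem hx), h12, h13,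
          ⟨s + 1, h11 (Finset.mem_insert_self _ _), by omega⟩, hG⟩
  -- existence of valid B-sets avoiding a fixed set G
  have existsB_ne : ∀ (F G : Finset ℕ), F ⊆ Icc (n - t) (n - s) → F.card < t - s →
      ∃ S, F ⊆ S ∧ S ⊆ Icc (n - t) (n - s) ∧ S.card = t - s ∧ S ≠ G := by
    intro F G hF hc
    have h2 : 1 < ((Icc (n - t) (n - s)) \ F).card := by
      rw [Finset.card_sdiff_of_subset hF, cardIccB]; omega
    obtain ⟨b₁, hb₁, b₂, hb₂, hbne⟩ := Finset.one_lt_card.mp h2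
    rw [Finset.mem_sdiff] at hb₁ hb₂
    obtain ⟨S₁, h11, h12, h13, h14⟩ := extendB (insert b₁ F) b₂
      (Finset.insert_subset hb₁.1 hF)
      (by rw [Finset.card_insert_of_notMem hb₁.2]; omega)
      (by
        intro h0
        rcases Finset.mem_insert.mp h0 with h | h
        · exact hbne h.symm
        · exact hb₂.2 h)
    obtain ⟨S₂, h21, h22, h23, h24⟩ := extendB (insert b₂ F) 0
      (Finset.insert_subset hb₂.1 hF)
      (by rw [Finset.card_insert_of_notMem hb₂.2]; omega)
      (by
        intro h0
        rcases Finset.mem_insert.mp h0 with h | h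
        · have := (Finset.mem_Icc.mp hb₂.1).1; omega
        · have := (Finset.mem_Icc.mp (hF h)).1; omega)
    have hb2 : b₂ ∈ S₂ := h21 (Finset.mem_insert_self _ _)
    have hS12 : S₁ ≠ S₂ := fun h => h14 (h ▸ hb2)
    by_cases hG : S₁ = G
    · exact ⟨S₂, fun x hx => h21 (Finset.mem_insert_of_mem hx), h22, h23,
        fun h => hS12 (hG.trans h.symm)⟩
    · exact ⟨S₁, fun x hx => h11 (Finset.mem_insert_of_mem hx), h12, h13, hG⟩
  have disjA : ∀ S : Finset ℕ, S ⊆ Icc (s + 1) n → ∀ a ∈ S, a ∉ Icc 1 s := by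
    intro S hS a ha h
    have h1 := (Finset.mem_Icc.mp (hS ha)).1
    have h2 := (Finset.mem_Icc.mp h).2
    omega
  have disjB : ∀ S : Finset ℕ, S ⊆ Icc (n - t) (n - s) → ∀ a ∈ S, a ∉ Icc (n - s + 1) n := by
    intro S hS a ha h
    have h1 := (Finset.mem_Icc.mp (hS ha)).2
    have h2 := (Finset.mem_Icc.mp h).1
    omega
  refine ⟨?_, ?_, ?_⟩
  · -- Part 1: covering
    intro W hW hWcard
    by_cases hint : (W ∩ Icc 1 s).Nonempty
    · -- W meets [s]
      have hFsub : W \ Icc 1 s ⊆ Icc (s + 1) n := by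
        intro x hx
        rw [Finset.mem_sdiff] at hx
        have h1 := Finset.mem_Icc.mp (hW hx.1)
        rw [Finset.mem_Icc] at hx ⊢
        omega
      have hFcard : (W \ Icc 1 s).card < t - s := by
        have h := Finset.card_inter_add_card_sdiff W (Icc 1 s)
        have := Finset.card_pos.mpr hint
        omega
      obtain ⟨S, hFS, hsub, hcard, hlow, -⟩ := existsA_ne (W \ Icc 1 s) ∅ hFsub hFcard
      refine ⟨Icc 1 s ∪ S, Or.inl ⟨S, hsub, hcard, hlow, rfl⟩, ?_⟩
      intro x hx
      by_cases hxs : x ∈ Icc 1 s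
      · exact Finset.mem_union_left _ hxs
      · exact Finset.mem_union_right _ (hFS (Finset.mem_sdiff.mpr ⟨hx, hxs⟩))
    · -- W disjoint from [s]
      have hWsub : W ⊆ Icc (s + 1) n := by
        intro x hx
        have h1 := Finset.mem_Icc.mp (hW hx)
        rw [Finset.mem_Icc]
        have hxs : ¬ x ≤ s := fun h => hint ⟨x, Finset.mem_inter.mpr
          ⟨hx, Finset.mem_Icc.mpr ⟨h1.1, h⟩⟩⟩
        omega
      by_cases hlow : ∃ x ∈ W, x < n - t
      · obtain ⟨S, hWS, hsub, hcard, -⟩ := extendA W 0 hWsub (le_of_eq hWcard)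
          (fun h => by have := (Finset.mem_Icc.mp (hWsub h)).1; omega)
        obtain ⟨x, hxW, hxk⟩ := hlow
        exact ⟨Icc 1 s ∪ S, Or.inl ⟨S, hsub, hcard, ⟨x, hWS hxW, hxk⟩, rfl⟩,
          fun y hy => Finset.mem_union_right _ (hWS hy)⟩
      · -- W ⊆ Icc (n-t) n
        have hWsub2 : ∀ x ∈ W, n - t ≤ x ∧ x ≤ n := by
          intro x hx
          have h1 := Finset.mem_Icc.mp (hW hx)
          have h2 : ¬ x < n - t := fun h => hlow ⟨x, hx, h⟩
          omega
        obtain ⟨S, hFS, hsub, hcard, -⟩ := extendB (W ∩ Icc (n - t) (n - s)) 0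
          Finset.inter_subset_right
          (le_trans (Finset.card_le_card Finset.inter_subset_left) (le_of_eq hWcard))
          (fun h => by
            have := (Finset.mem_Icc.mp (hW (Finset.mem_inter.mp h).1)).1; omega)
        refine ⟨Icc (n - s + 1) n ∪ S, Or.inr ⟨S, hsub, hcard, rfl⟩, ?_⟩
        intro x hx
        have h1 := hWsub2 x hx
        by_cases hxs : x ≤ n - s
        · exact Finset.mem_union_right _ (hFS (Finset.mem_inter.mpr
            ⟨hx, Finset.mem_Icc.mpr ⟨h1.1, hxs⟩⟩))
        · exact Finset.mem_union_left _ (Finset.mem_Icc.mpr ⟨by omega, h1.2⟩)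
  · -- Part 2: unique private subset
    rintro e (⟨S, hsub, hcard, ⟨i, hiS, hik⟩, rfl⟩ | ⟨S, hsub, hcard, rfl⟩)
    · -- A-edge
      refine ⟨S, ⟨Finset.subset_union_right, hcard, ?_⟩, ?_⟩
      · rintro e' (⟨S', hsub', hcard', -, rfl⟩ | ⟨S'', hsub'', hcard'', rfl⟩) hSe'
        · have hSS' : S ⊆ S' := by
            intro x hx
            rcases Finset.mem_union.mp (hSe' hx) with h | h
            · exact absurd h (disjA S hsub x hx)
            · exact h
          have : S = S' := Finset.eq_of_subset_of_card_le hSS' (by omega)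
          rw [this]
        · exfalso
          rcases Finset.mem_union.mp (hSe' hiS) with h | h
          · have := Finset.mem_Icc.mp h; omega
          · have := Finset.mem_Icc.mp (hsub'' h); omega
      · rintro W ⟨hWe, hWcard, hWpriv⟩
        by_contra hne
        have hF : W \ Icc 1 s ⊆ S := by
          intro x hx
          rw [Finset.mem_sdiff] at hx
          rcases Finset.mem_union.mp (hWe hx.1) with h | h
          · exact absurd h hx.2
          · exact h
        have hint : (W ∩ Icc 1 s).Nonempty := by
          by_contra h
          apply hne
          have hWS : W ⊆ S := fun x hx => hF (Finset.mem_sdiff.mpr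
            ⟨hx, fun hx' => h ⟨x, Finset.mem_inter.mpr ⟨hx, hx'⟩⟩⟩)
          exact Finset.eq_of_subset_of_card_le hWS (by omega)
        have hcardF : (W \ Icc 1 s).card < t - s := by
          have h := Finset.card_inter_add_card_sdiff W (Icc 1 s)
          have := Finset.card_pos.mpr hint
          omega
        obtain ⟨S', hFS', hsub', hcard', hlow', hne'⟩ :=
          existsA_ne (W \ Icc 1 s) S (hF.trans hsub) hcardF
        have hWe' : W ⊆ Icc 1 s ∪ S' := by
          intro x hx
          by_cases hxs : x ∈ Icc 1 s
          · exact Finset.mem_union_left _ hxs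
          · exact Finset.mem_union_right _ (hFS' (Finset.mem_sdiff.mpr ⟨hx, hxs⟩))
        have heq := hWpriv _ (Or.inl ⟨S', hsub', hcard', hlow', rfl⟩) hWe'
        exact hne' (union_cancel (Icc 1 s) S' S (disjA S' hsub') (disjA S hsub) heq)
    · -- B-edge
      refine ⟨S, ⟨Finset.subset_union_right, hcard, ?_⟩, ?_⟩
      · rintro e' (⟨S', hsub', hcard', ⟨i', hi'S, hi'k⟩, rfl⟩ | ⟨S'', hsub'', hcard'', rfl⟩) hSe'
        · exfalso
          have hSS' : S ⊆ S' := by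
            intro x hx
            rcases Finset.mem_union.mp (hSe' hx) with h | h
            · have h1 := (Finset.mem_Icc.mp (hsub hx)).1
              have h2 := (Finset.mem_Icc.mp h).2
              omega
            · exact h
          have hSeq : S = S' := Finset.eq_of_subset_of_card_le hSS' (by omega)
          have := (Finset.mem_Icc.mp (hsub (hSeq ▸ hi'S))).1
          omega
        · have hSS'' : S ⊆ S'' := by
            intro x hx
            rcases Finset.mem_union.mp (hSe' hx) with h | h
            · exact absurd h (disjB S hsub x hx)
            · exact h
          have : S = S'' := Finset.eq_of_subset_of_card_le hSS'' (by omega)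
          rw [this]
      · rintro W ⟨hWe, hWcard, hWpriv⟩
        by_contra hne
        have hF : W \ Icc (n - s + 1) n ⊆ S := by
          intro x hx
          rw [Finset.mem_sdiff] at hx
          rcases Finset.mem_union.mp (hWe hx.1) with h | h
          · exact absurd h hx.2
          · exact h
        have hint : (W ∩ Icc (n - s + 1) n).Nonempty := by
          by_contra h
          apply hne
          have hWS : W ⊆ S := fun x hx => hF (Finset.mem_sdiff.mpr
            ⟨hx, fun hx' => h ⟨x, Finset.mem_inter.mpr ⟨hx, hx'⟩⟩⟩)
          exact Finset.eq_of_subset_of_card_le hWS (by omega)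
        have hcardF : (W \ Icc (n - s + 1) n).card < t - s := by
          have h := Finset.card_inter_add_card_sdiff W (Icc (n - s + 1) n)
          have := Finset.card_pos.mpr hint
          omega
        obtain ⟨S', hFS', hsub', hcard', hne'⟩ :=
          existsB_ne (W \ Icc (n - s + 1) n) S (hF.trans hsub) hcardF
        have hWe' : W ⊆ Icc (n - s + 1) n ∪ S' := by
          intro x hx
          by_cases hxs : x ∈ Icc (n - s + 1) n
          · exact Finset.mem_union_left _ hxs
          · exact Finset.mem_union_right _ (hFS' (Finset.mem_sdiff.mpr ⟨hx, hxs⟩))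
        have heq := hWpriv _ (Or.inr ⟨S', hsub', hcard', rfl⟩) hWe'
        exact hne' (union_cancel (Icc (n - s + 1) n) S' S
          (disjB S' hsub') (disjB S hsub) heq)
  · -- Part 3: no universal vertex
    rintro ⟨v, hv, hall⟩
    rw [Finset.mem_Icc] at hv
    by_cases hvs : v ≤ s
    · obtain ⟨S, -, hsub, hcard, -⟩ := extendB ∅ 0 (Finset.empty_subset _)
        (by simp) (Finset.notMem_empty _)
      have hmem := hall _ (Or.inr ⟨S, hsub, hcard, rfl⟩)
      rcases Finset.mem_union.mp hmem with h | h
      · have := Finset.mem_Icc.mp h; omega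
      · have := Finset.mem_Icc.mp (hsub h); omega
    · set x := if v = s + 1 then s + 2 else s + 1 with hxdef
      have hx : x ∈ Icc (s + 1) n ∧ x < n - t ∧ x ≠ v := by
        rw [hxdef]
        split <;> refine ⟨Finset.mem_Icc.mpr ⟨by omega, by omega⟩, by omega, by omega⟩
      obtain ⟨S, hFS, hsub, hcard, hvS⟩ := extend_avoid (Icc (s + 1) n) {x} v (t - s)
        (Finset.singleton_subset_iff.mpr hx.1)
        (fun h => hx.2.2 (Finset.mem_singleton.mp h).symm)
        (by simp; omega) (by rw [cardIccA]; omega)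
      have hmem := hall _ (Or.inl ⟨S, hsub, hcard,
        ⟨x, hFS (Finset.mem_singleton_self x), hx.2.1⟩, rfl⟩)
      rcases Finset.mem_union.mp hmem with h | h
      · have := Finset.mem_Icc.mp h; omega
      · exact hvS h
end

section
/- Let H be a k-uniform hypergraph on n vertices and H^c its k-uniform complement. Then H is a primitive uniquely K_r^(k)-saturated hypergraph if and only if H^c is a uniquely τ-critical hypergraph with no isolated vertices and τ(H^c) = n - r + 1. -/
open Finset

lemma inter_nonempty_iff_not_subset_compl {n : ℕ} (e T : Finset (Fin n)) :
    (e ∩ T).Nonempty ↔ ¬ e ⊆ Tᶜ := by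
  rw [Finset.not_subset]
  constructor
  · rintro ⟨x, hx⟩
    rw [Finset.mem_inter] at hx
    exact ⟨x, hx.1, by simp [hx.2]⟩
  · rintro ⟨x, hxe, hx⟩
    rw [Finset.mem_compl, not_not] at hx
    exact ⟨x, Finset.mem_inter.2 ⟨hxe, hx⟩⟩

theorem stmt8 (n k r : ℕ) (hkr : k < r) (hrn : r < n)
    (E : Finset (Finset (Fin n))) (hunif : Uniform n k E) :
    IsPUS n k r E ↔
    ((∀ v : Fin n, ∃ e : Finset (Fin n), e.card = k ∧ e ∉ E ∧ v ∈ e) ∧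
     (∃ T : Finset (Fin n), T.card = n - r + 1 ∧
        ∀ e : Finset (Fin n), e.card = k → e ∉ E → (e ∩ T).Nonempty) ∧
     (∀ T : Finset (Fin n),
        (∀ e : Finset (Fin n), e.card = k → e ∉ E → (e ∩ T).Nonempty) →
        n - r + 1 ≤ T.card) ∧
     (∀ e : Finset (Fin n), e.card = k → e ∉ E →
        ∃! T : Finset (Fin n), T.card = n - r ∧
          ∀ e' : Finset (Fin n), e'.card = k → e' ∉ E → e' ≠ e → (e' ∩ T).Nonempty)) := by
  constructor
  · rintro ⟨_, ⟨hnc, hsat⟩, hprim⟩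
    have hk1 : 1 ≤ k := by
      by_contra h
      have hk0 : k = 0 := by omega
      exact hprim ⟨⟨0, by omega⟩, fun S hS hv => by
        have : S = ∅ := Finset.card_eq_zero.1 (by rw [hS, hk0])
        simp [this] at hv⟩
    have hcond1 : ∀ v : Fin n, ∃ e : Finset (Fin n), e.card = k ∧ e ∉ E ∧ v ∈ e := by
      intro v
      by_contra h
      push_neg at h
      exact hprim ⟨v, fun S hS hv => by
        by_contra hSE
        exact h S hS hSE hv⟩
    refine ⟨hcond1, ?_, ?_, ?_⟩
    · -- existence of a transversal of size n - r + 1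
      obtain ⟨S, hSk, hSE, -⟩ := hcond1 ⟨0, by omega⟩
      obtain ⟨Q, ⟨hQr, hQcl⟩, -⟩ := hsat S hSk hSE
      have hSQ : S ⊆ Q := by
        by_contra hSQ
        exact hnc ⟨Q, hQr, fun T hTQ hTk =>
          (hQcl T hTQ hTk).resolve_right (fun h => hSQ (h ▸ hTQ))⟩
      obtain ⟨v, hv⟩ : S.Nonempty := Finset.card_pos.1 (by omega)
      refine ⟨(Q.erase v)ᶜ, ?_, ?_⟩
      · rw [Finset.card_compl, Fintype.card_fin, Finset.card_erase_of_mem (hSQ hv), hQr]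
        have hQn : Q.card ≤ n := by
          simpa using Finset.card_le_card (Finset.subset_univ Q)
        omega
      · intro e hek heE
        rw [inter_nonempty_iff_not_subset_compl, compl_compl]
        intro hsub
        have he := hQcl e (hsub.trans (Finset.erase_subset v Q)) hek
        rcases he with he | he
        · exact heE he
        · subst he
          exact (Finset.mem_erase.1 (hsub hv)).1 rfl
    · -- minimality
      intro T hT
      by_contra h
      push_neg at h
      have hTc : r ≤ Tᶜ.card := by
        rw [Finset.card_compl, Fintype.card_fin]
        omega
      obtain ⟨R, hRsub, hRr⟩ := Finset.exists_subset_card_eq hTc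
      refine hnc ⟨R, hRr, fun e heR hek => ?_⟩
      by_contra heE
      have := hT e hek heE
      rw [inter_nonempty_iff_not_subset_compl] at this
      exact this (heR.trans hRsub)
    · -- unique critical transversals
      intro e hek heE
      obtain ⟨Q, ⟨hQr, hQcl⟩, hQuniq⟩ := hsat e hek heE
      refine ⟨Qᶜ, ⟨?_, ?_⟩, ?_⟩
      · rw [Finset.card_compl, Fintype.card_fin, hQr]
      · intro e' he'k he'E he'ne
        rw [inter_nonempty_iff_not_subset_compl, compl_compl]
        intro hsub
        rcases hQcl e' hsub he'k with h | h
        · exact he'E h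
        · exact he'ne h
      · rintro T' ⟨hT'c, hT'p⟩
        have hQ' : T'ᶜ = Q := by
          refine hQuniq T'ᶜ ⟨?_, ?_⟩
          · rw [Finset.card_compl, Fintype.card_fin, hT'c]
            omega
          · intro Tsub hsubQ hTk
            by_contra hcon
            push_neg at hcon
            have := hT'p Tsub hTk hcon.1 hcon.2
            rw [inter_nonempty_iff_not_subset_compl] at this
            exact this hsubQ
        rw [← hQ', compl_compl]
  · rintro ⟨h1, h2, h3, h4⟩
    refine ⟨hunif, ⟨?_, ?_⟩, ?_⟩
    · rintro ⟨Q, hQr, hQcl⟩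
      have := h3 Qᶜ (fun e hek heE => by
        rw [inter_nonempty_iff_not_subset_compl, compl_compl]
        intro hsub
        exact heE (hQcl e hsub hek))
      rw [Finset.card_compl, Fintype.card_fin, hQr] at this
      omega
    · intro S hSk hSE
      obtain ⟨T, ⟨hTc, hTp⟩, hTu⟩ := h4 S hSk hSE
      refine ⟨Tᶜ, ⟨?_, ?_⟩, ?_⟩
      · rw [Finset.card_compl, Fintype.card_fin, hTc]
        omega
      · intro T' hT' hT'k
        by_contra hcon
        push_neg at hcon
        have := hTp T' hT'k hcon.1 hcon.2
        rw [inter_nonempty_iff_not_subset_compl] at this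
        exact this hT'
      · rintro Q' ⟨hQ'r, hQ'cl⟩
        have hT' : Q'ᶜ = T := by
          refine hTu Q'ᶜ ⟨?_, ?_⟩
          · rw [Finset.card_compl, Fintype.card_fin, hQ'r]
          · intro e' he'k he'E he'ne
            rw [inter_nonempty_iff_not_subset_compl, compl_compl]
            intro hsub
            rcases hQ'cl e' hsub he'k with h | h
            · exact he'E h
            · exact he'ne h
        rw [← hT', compl_compl]
    · rintro ⟨v, hv⟩
      obtain ⟨e, hek, heE, hve⟩ := h1 v
      exact heE (hv e hek hve)
end

section
/- Let k,r,n be integers with 3 ≤ k < r < n satisfying 2(n-r+k-1) ≤ n ≤ C(n-r+k-1, k-1) + n-r+k-1. Then there exists a primitive uniquely K_r^(k)-saturated hypergraph on n vertices. -/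
open Finset

/-!
Split the vertices into a set `X` of `m = n - r + k - 1` vertices and `p = n - m` label vertices,
give every `(k-1)`-subset `A ⊆ X` a label vertex `label A`, and take as edges all `k`-sets except
the sets `A ∪ {label A}`. An `r`-set `Q` misses `m - k + 1` vertices; if `Q` contains `s ≥ k`
vertices of `X`, then `Q` misses only `s - k + 1` label vertices, so as soon as the
`(k-1)`-subsets of any `s`-subset of `X` carry at least `s - k + 3` distinct labels, `Q` contains at
least two non-edges. Hence `Q` contains exactly one non-edge `A ∪ {label A}` only when
`Q = Xᶜ ∪ A`, and every `r`-set contains one, which is unique saturation. Every label vertex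
is used, so no vertex is dominating.

Such a labelling exists when `m ≤ p ≤ C(m, k-1)`: identify `X` with `ZMod m` and choose the labels
as a surjection onto the label vertices that refines the sum `∑ A`. This sum is a proper colouring
of the Johnson graph `J(m, k-1)` with `m` colours (Graham–Sloane), and in a cyclic group the
`(k-1)`-subsets of an `s`-set have at least `s - k + 3` distinct sums.
-/

section SubsetSums

variable {α G : Type*} [AddCommGroup G] [DecidableEq G] {σ : α → G} {T : Finset α}

theorem card_le_of_forall_nsmul_sub_eq_zero [Fintype G] [IsAddCyclic G] (hσ : Set.InjOn σ T)
    {q : ℕ} (hq : 0 < q) {b : α} (h : ∀ a ∈ T, q • (σ a - σ b) = 0) : #T ≤ q := by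
  classical
  calc #T = #(T.image (σ · - σ b)) :=
        (card_image_of_injOn fun x hx y hy hxy => hσ hx hy (sub_left_inj.1 hxy)).symm
    _ ≤ #{x : G | q • x = 0} := card_le_card fun x hx => by
        obtain ⟨a, ha, rfl⟩ := mem_image.1 hx
        simpa using h a ha
    _ ≤ q := IsAddCyclic.card_nsmul_eq_zero_le hq

theorem card_image_add_sdiff [DecidableEq α] (hσ : Set.InjOn σ T) {F : Finset α} (hF : F ⊆ T)
    (c : G) :
    #((T \ F).image (c + σ ·)) = #T - #F := by
  rw [card_image_of_injOn, card_sdiff_of_subset hF]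
  exact fun x hx y hy hxy => hσ (mem_sdiff.1 hx).1 (mem_sdiff.1 hy).1 (add_left_cancel hxy)

theorem sum_image_add_sdiff [DecidableEq α] (hσ : Set.InjOn σ T) {F : Finset α} (hF : F ⊆ T) :
    ∑ x ∈ (T \ F).image ((∑ a ∈ F, σ a) + σ ·), x =
      (#T - #F) • ∑ a ∈ F, σ a + ((∑ a ∈ T, σ a) - ∑ a ∈ F, σ a) := by
  rw [sum_image fun x hx y hy hxy => hσ (mem_sdiff.1 hx).1 (mem_sdiff.1 hy).1 (add_left_cancel hxy),
    sum_add_distrib, sum_const, card_sdiff_of_subset hF, sum_sdiff_eq_sub hF]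

/-- The translates `∑ F + (T \ F)` for `#F = k - 2` already give `s - k + 2` sums; if there were
no more, all these translates would coincide, and comparing their total sums for `F = D ∪ {a}` and
`F = D ∪ {b}` gives `(s - k + 1) • (a - b) = 0` for all `a b ∈ T`, impossible for `s` elements of a
cyclic group. -/
theorem card_add_three_le_card_image_sum [DecidableEq α] [Fintype G] [IsAddCyclic G]
    (hσ : Set.InjOn σ T) {k : ℕ} (hk : 3 ≤ k) (hT : k ≤ #T) :
    #T + 3 ≤ #((T.powersetCard (k - 1)).image fun A => ∑ a ∈ A, σ a) + k := by
  set Γ := (T.powersetCard (k - 1)).image fun A => ∑ a ∈ A, σ a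
  have translate_subset : ∀ F ⊆ T, #F = k - 2 → (T \ F).image ((∑ a ∈ F, σ a) + σ ·) ⊆ Γ := by
    intro F hF hFk x hx
    obtain ⟨u, hu, rfl⟩ := mem_image.1 hx
    have huF := (mem_sdiff.1 hu).2
    refine mem_image.2
      ⟨insert u F, mem_powersetCard.2 ⟨insert_subset (mem_sdiff.1 hu).1 hF, ?_⟩, ?_⟩
    · rw [card_insert_of_notMem huF]; omega
    · rw [sum_insert huF, add_comm]
  obtain ⟨F₀, hF₀, hF₀k⟩ := exists_subset_card_eq (s := T) (n := k - 2) (by omega)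
  have hΓ := card_le_card (translate_subset F₀ hF₀ hF₀k)
  rw [card_image_add_sdiff hσ hF₀] at hΓ
  by_contra! hlt
  have translate_eq : ∀ F ⊆ T, #F = k - 2 → (T \ F).image ((∑ a ∈ F, σ a) + σ ·) = Γ :=
    fun F hF hFk => eq_of_subset_of_card_le (translate_subset F hF hFk)
      (by rw [card_image_add_sdiff hσ hF]; omega)
  obtain ⟨b, hb⟩ : T.Nonempty := card_pos.1 (by omega)
  suffices ∀ a ∈ T, (#T - k + 1) • (σ a - σ b) = 0 by
    have := card_le_of_forall_nsmul_sub_eq_zero hσ (by omega) this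
    omega
  intro a ha
  obtain rfl | hab := eq_or_ne a b
  · simp
  obtain ⟨D, hD, hDk⟩ := exists_subset_card_eq (s := T \ {a, b}) (n := k - 3) (by
    rw [card_sdiff_of_subset (by simp [insert_subset_iff, ha, hb]), card_pair hab]; omega)
  have haD : a ∉ D := fun h => by simpa using hD h
  have hbD : b ∉ D := fun h => by simpa using hD h
  have hDT : D ⊆ T := hD.trans sdiff_subset
  have hcard : ∀ x ∉ D, #(insert x D) = k - 2 := fun x hx => by
    rw [card_insert_of_notMem hx]; omega
  have hsum := congrArg (∑ x ∈ ·, x) ((translate_eq _ (insert_subset ha hDT) (hcard a haD)).trans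
    (translate_eq _ (insert_subset hb hDT) (hcard b hbD)).symm)
  rw [sum_image_add_sdiff hσ (insert_subset ha hDT), sum_image_add_sdiff hσ (insert_subset hb hDT),
    hcard a haD, hcard b hbD, show #T - (k - 2) = (#T - k + 1) + 1 by omega, sum_insert haD,
    sum_insert hbD] at hsum
  have hshift : ∀ z : G, (#T - k + 1 + 1) • z + ((∑ a ∈ T, σ a) - z) =
      (#T - k + 1) • z + ∑ a ∈ T, σ a := fun z => by rw [succ_nsmul]; abel
  rw [hshift, hshift, add_left_inj, nsmul_add, nsmul_add, add_left_inj] at hsum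
  rw [nsmul_sub, hsum, sub_self]

end SubsetSums

theorem exists_surjOn_factor_of_card_image_le {α β γ : Type*} [DecidableEq α] [DecidableEq γ]
    [Nonempty α] [Nonempty β] (f : α → γ) (t : Finset β) (s : Finset α) (hft : #(s.image f) ≤ #t)
    (hts : #t ≤ #s) :
    ∃ (g : α → β) (φ : β → γ), Set.MapsTo g s t ∧ Set.SurjOn g s t ∧ ∀ a ∈ s, φ (g a) = f a := by
  induction s using Finset.strongInduction with
  | H s ih =>
  obtain hst | hst := hts.eq_or_lt
  · obtain ⟨g, hg⟩ := s.finite_toSet.exists_bijOn_of_encard_eq (t := (t : Set β))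
      (by simp [Set.encard_coe_eq_coe_finsetCard, hst])
    exact ⟨g, f ∘ Function.invFunOn g s, hg.mapsTo, hg.surjOn,
      fun a ha => congrArg f (hg.injOn.leftInvOn_invFunOn ha)⟩
  obtain ⟨a, ha, b, hb, hab, hfab⟩ := exists_ne_map_eq_of_card_lt_of_maps_to (hft.trans_lt hst)
    (fun x hx => mem_image_of_mem f hx)
  have hb' : b ∈ s.erase a := mem_erase.2 ⟨hab.symm, hb⟩
  obtain ⟨g, φ, hmaps, hsurj, hφ⟩ := ih (s.erase a) (erase_ssubset ha)
    ((card_le_card (image_subset_image (erase_subset a s))).trans hft)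
    (by rw [card_erase_of_mem ha]; omega)
  refine ⟨Function.update g a (g b), φ, fun x hx => ?_, fun y hy => ?_, fun x hx => ?_⟩
  · obtain rfl | hxa := eq_or_ne x a
    · simpa using hmaps hb'
    · simpa [hxa] using hmaps (mem_erase.2 ⟨hxa, hx⟩)
  · obtain ⟨x, hx, rfl⟩ := hsurj hy
    exact ⟨x, mem_of_mem_erase hx, by simp [ne_of_mem_erase hx]⟩
  · obtain rfl | hxa := eq_or_ne x a
    · simpa [hfab] using hφ b hb'
    · simpa [hxa] using hφ x (mem_erase.2 ⟨hxa, hx⟩)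

theorem isPUS_of_nonEdges {n k r : ℕ} (F : Finset (Finset (Fin n))) (hF : ∀ S ∈ F, #S = k)
    (hcover : ∀ v, ∃ S ∈ F, v ∈ S) (hhit : ∀ Q : Finset (Fin n), #Q = r → ∃ S ∈ F, S ⊆ Q)
    (huniq : ∀ S ∈ F, ∃! Q : Finset (Fin n), #Q = r ∧ ∀ S' ∈ F, S' ⊆ Q → S' = S) :
    IsPUS n k r (univ.powersetCard k \ F) := by
  have mem_E : ∀ T, T ∈ univ.powersetCard k \ F ↔ #T = k ∧ T ∉ F := by simp
  refine ⟨fun T hT => ((mem_E T).1 hT).1, ⟨?_, fun S hS hSE => ?_⟩, ?_⟩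
  · rintro ⟨Q, hQ, hclique⟩
    obtain ⟨S, hSF, hSQ⟩ := hhit Q hQ
    exact ((mem_E S).1 (hclique S hSQ (hF S hSF))).2 hSF
  · have hSF : S ∈ F := by simpa [mem_E, hS] using hSE
    refine (existsUnique_congr fun Q => and_congr_right fun _ => ?_).1 (huniq S hSF)
    refine ⟨fun h T hTQ hT => ?_, fun h S' hS'F hS'Q => ?_⟩
    · by_cases hTF : T ∈ F
      · exact Or.inr (h T hTF hTQ)
      · exact Or.inl ((mem_E T).2 ⟨hT, hTF⟩)
    · exact (h S' hS'Q (hF S' hS'F)).resolve_left fun hE => ((mem_E S').1 hE).2 hS'F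
  · rintro ⟨v, hv⟩
    obtain ⟨S, hSF, hvS⟩ := hcover v
    exact ((mem_E S).1 (hv S (hF S hSF) hvS)).2 hSF

section Construction

variable {V : Type*} [Fintype V] [DecidableEq V]

structure IsSpreadLabelling (X : Finset V) (k : ℕ) (label : Finset V → V) : Prop where
  mapsTo : Set.MapsTo label (X.powersetCard (k - 1)) (Xᶜ : Finset V)
  surjOn : Set.SurjOn label (X.powersetCard (k - 1)) (Xᶜ : Finset V)
  card_le : ∀ T ⊆ X, k ≤ #T → #T + 3 ≤ #((T.powersetCard (k - 1)).image label) + k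

def nonEdges (X : Finset V) (k : ℕ) (label : Finset V → V) : Finset (Finset V) :=
  (X.powersetCard (k - 1)).image fun A => insert (label A) A

theorem compl_subset_and_card_inter_eq {X Q : Finset V} {k : ℕ}
    (hQ : #Q + #X = Fintype.card V + k - 1) (hkQ : #(X ∩ Q) < k) :
    Xᶜ ⊆ Q ∧ #(X ∩ Q) = k - 1 := by
  have hunion := card_union_add_card_inter X Q
  have hle : #(X ∪ Q) ≤ Fintype.card V := card_le_univ _
  refine ⟨fun v hv => ?_, by omega⟩
  have huniv : X ∪ Q = univ := eq_univ_of_card _ (by omega)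
  exact (mem_union.1 (huniv ▸ mem_univ v)).resolve_left (mem_compl.1 hv)

namespace IsSpreadLabelling

variable {X : Finset V} {k : ℕ} {label : Finset V → V}

theorem label_notMem (hL : IsSpreadLabelling X k label) {A : Finset V} (hA : A ⊆ X)
    (hAk : #A = k - 1) : label A ∉ X := by
  simpa using hL.mapsTo (mem_powersetCard.2 ⟨hA, hAk⟩)

theorem insert_label_inter (hL : IsSpreadLabelling X k label) {A : Finset V} (hA : A ⊆ X)
    (hAk : #A = k - 1) : insert (label A) A ∩ X = A := by
  rw [insert_inter_of_notMem (hL.label_notMem hA hAk), inter_eq_left.2 hA]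

theorem card_of_mem_nonEdges (hL : IsSpreadLabelling X k label) (hk : 1 ≤ k) {S : Finset V}
    (hS : S ∈ nonEdges X k label) : #S = k := by
  obtain ⟨A, hA, rfl⟩ := mem_image.1 hS
  obtain ⟨hAX, hAk⟩ := mem_powersetCard.1 hA
  rw [card_insert_of_notMem fun h => hL.label_notMem hAX hAk (hAX h)]
  omega

/-- The `s - k + 1` vertices outside `X ∪ Q` cannot block all of the at least `s - k + 3` labels
of `(k-1)`-subsets of the `s`-set `X ∩ Q`. -/
theorem exists_ne_label_mem (hL : IsSpreadLabelling X k label) {Q : Finset V}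
    (hQ : #Q + #X = Fintype.card V + k - 1) (hkQ : k ≤ #(X ∩ Q)) :
    ∃ A₁ ∈ (X ∩ Q).powersetCard (k - 1), ∃ A₂ ∈ (X ∩ Q).powersetCard (k - 1),
      A₁ ≠ A₂ ∧ label A₁ ∈ Q ∧ label A₂ ∈ Q := by
  set L := ((X ∩ Q).powersetCard (k - 1)).image label
  have hL_out : L \ Q ⊆ (X ∪ Q)ᶜ := by
    intro v hv
    obtain ⟨hvL, hvQ⟩ := mem_sdiff.1 hv
    obtain ⟨A, hA, rfl⟩ := mem_image.1 hvL
    have hA' := mem_powersetCard.1 hA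
    simpa [hvQ] using hL.label_notMem (hA'.1.trans inter_subset_left) hA'.2
  have hcard_out := card_le_card hL_out
  have hspread : #(X ∩ Q) + 3 ≤ #L + k := hL.card_le _ inter_subset_left hkQ
  have := card_sdiff_add_card_inter L Q
  have := card_union_add_card_inter X Q
  rw [card_compl] at hcard_out
  obtain ⟨v₁, hv₁, v₂, hv₂, hne⟩ := one_lt_card.1 (show 1 < #(L ∩ Q) by omega)
  obtain ⟨A₁, hA₁, rfl⟩ := mem_image.1 (mem_inter.1 hv₁).1
  obtain ⟨A₂, hA₂, rfl⟩ := mem_image.1 (mem_inter.1 hv₂).1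
  exact ⟨A₁, hA₁, A₂, hA₂, fun h => hne (h ▸ rfl), (mem_inter.1 hv₁).2, (mem_inter.1 hv₂).2⟩

theorem exists_nonEdges_subset (hL : IsSpreadLabelling X k label) {Q : Finset V}
    (hQ : #Q + #X = Fintype.card V + k - 1) : ∃ S ∈ nonEdges X k label, S ⊆ Q := by
  by_cases hkQ : k ≤ #(X ∩ Q)
  · obtain ⟨A, hA, -, -, -, hlabel, -⟩ := hL.exists_ne_label_mem hQ hkQ
    obtain ⟨hAXQ, hAk⟩ := mem_powersetCard.1 hA
    exact ⟨_, mem_image_of_mem _ (mem_powersetCard.2 ⟨hAXQ.trans inter_subset_left, hAk⟩),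
      insert_subset hlabel (hAXQ.trans inter_subset_right)⟩
  · obtain ⟨hXQ, hcard⟩ := compl_subset_and_card_inter_eq hQ (not_le.1 hkQ)
    have hlabel := hL.label_notMem inter_subset_left hcard
    exact ⟨_, mem_image_of_mem _ (mem_powersetCard.2 ⟨inter_subset_left, hcard⟩),
      insert_subset (hXQ (mem_compl.2 hlabel)) inter_subset_right⟩

theorem insert_label_injOn (hL : IsSpreadLabelling X k label) {A₁ A₂ : Finset V}
    (hA₁ : A₁ ∈ X.powersetCard (k - 1)) (hA₂ : A₂ ∈ X.powersetCard (k - 1))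
    (h : insert (label A₁) A₁ = insert (label A₂) A₂) : A₁ = A₂ := by
  obtain ⟨hA₁X, hA₁k⟩ := mem_powersetCard.1 hA₁
  obtain ⟨hA₂X, hA₂k⟩ := mem_powersetCard.1 hA₂
  rw [← hL.insert_label_inter hA₁X hA₁k, h, hL.insert_label_inter hA₂X hA₂k]

/-- The `r`-set is `Xᶜ ∪ A`, where `S = insert (label A) A`. -/
theorem existsUnique_nonEdges_subset (hL : IsSpreadLabelling X k label) (hk : 1 ≤ k) {r : ℕ}
    (hr : r + #X = Fintype.card V + k - 1) {S : Finset V} (hS : S ∈ nonEdges X k label) :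
    ∃! Q : Finset V, #Q = r ∧ ∀ S' ∈ nonEdges X k label, S' ⊆ Q → S' = S := by
  obtain ⟨A, hA, rfl⟩ := mem_image.1 hS
  obtain ⟨hAX, hAk⟩ := mem_powersetCard.1 hA
  have hdisj : Disjoint Xᶜ A := disjoint_compl_left.mono_right hAX
  refine ⟨Xᶜ ∪ A, ⟨?_, ?_⟩, ?_⟩
  · have := card_le_univ X
    rw [card_union_of_disjoint hdisj, card_compl]
    omega
  · intro S' hS' hSQ
    obtain ⟨A', hA', rfl⟩ := mem_image.1 hS'
    obtain ⟨hA'X, hA'k⟩ := mem_powersetCard.1 hA'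
    have hA'A : A' ⊆ A := fun v hv =>
      (mem_union.1 (hSQ (mem_insert_of_mem hv))).resolve_left fun h => mem_compl.1 h (hA'X hv)
    rw [eq_of_subset_of_card_le hA'A (by omega)]
  · rintro Q ⟨hQ, honly⟩
    have hS : ∀ A' ∈ X.powersetCard (k - 1), insert (label A') A' ⊆ Q → A' = A :=
      fun A' hA' hA'Q => hL.insert_label_injOn hA' hA (honly _ (mem_image_of_mem _ hA') hA'Q)
    by_cases hkQ : k ≤ #(X ∩ Q)
    · exfalso
      obtain ⟨A₁, hA₁, A₂, hA₂, hne, hl₁, hl₂⟩ := hL.exists_ne_label_mem (by omega) hkQ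
      have sub : ∀ {B}, B ∈ (X ∩ Q).powersetCard (k - 1) → B ∈ X.powersetCard (k - 1) ∧ B ⊆ Q :=
        fun hB => ⟨powersetCard_mono inter_subset_left hB,
          (mem_powersetCard.1 hB).1.trans inter_subset_right⟩
      exact hne ((hS A₁ (sub hA₁).1 (insert_subset hl₁ (sub hA₁).2)).trans
        (hS A₂ (sub hA₂).1 (insert_subset hl₂ (sub hA₂).2)).symm)
    obtain ⟨hXQ, hcard⟩ := compl_subset_and_card_inter_eq (by omega) (not_le.1 hkQ)
    obtain ⟨S', hS', hSQ⟩ := hL.exists_nonEdges_subset (Q := Q) (by omega)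
    obtain ⟨A', hA', rfl⟩ := mem_image.1 hS'
    obtain rfl := hS A' hA' hSQ
    have hXQA : X ∩ Q = A' := (eq_of_subset_of_card_le
      (subset_inter hAX ((subset_insert _ _).trans hSQ)) (by omega)).symm
    rw [← hXQA]
    ext v
    by_cases hv : v ∈ X
    · simp [hv]
    · simp [hv, hXQ (mem_compl.2 hv)]

theorem exists_mem_nonEdges (hL : IsSpreadLabelling X k label) (hk : 2 ≤ k)
    (hkX : k - 1 ≤ #X) (v : V) : ∃ S ∈ nonEdges X k label, v ∈ S := by
  by_cases hv : v ∈ X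
  · obtain ⟨A, hvA, hAX, hAk⟩ := exists_subsuperset_card_eq (singleton_subset_iff.2 hv)
      (by simpa using (show 1 ≤ k - 1 by omega)) hkX
    exact ⟨_, mem_image_of_mem _ (mem_powersetCard.2 ⟨hAX, hAk⟩),
      mem_insert_of_mem (singleton_subset_iff.1 hvA)⟩
  · obtain ⟨A, hA, rfl⟩ := hL.surjOn (mem_compl.2 hv : v ∈ Xᶜ)
    exact ⟨_, mem_image_of_mem _ hA, mem_insert_self _ _⟩

end IsSpreadLabelling

end Construction

theorem exists_isSpreadLabelling {V G : Type*} [Fintype V] [DecidableEq V] [AddCommGroup G]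
    [Fintype G] [DecidableEq G] [IsAddCyclic G] {X : Finset V} {σ : V → G}
    (hσ : Set.InjOn σ X) {k : ℕ} (hk : 3 ≤ k) (hG : Fintype.card G ≤ #Xᶜ)
    (hX : #Xᶜ ≤ (#X).choose (k - 1)) : ∃ label, IsSpreadLabelling X k label := by
  obtain ⟨v, -⟩ : (Xᶜ).Nonempty := card_pos.1 (Fintype.card_pos.trans_le hG)
  have : Nonempty V := ⟨v⟩
  obtain ⟨label, φ, hmaps, hsurj, hφ⟩ := exists_surjOn_factor_of_card_image_le
    (fun A => ∑ a ∈ A, σ a) Xᶜ (X.powersetCard (k - 1))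
    ((card_le_univ _).trans hG) (by rwa [card_powersetCard])
  refine ⟨label, ⟨hmaps, hsurj, fun T hT hkT => ?_⟩⟩
  have hsums : (T.powersetCard (k - 1)).image (fun A => ∑ a ∈ A, σ a) =
      ((T.powersetCard (k - 1)).image label).image φ := by
    rw [image_image]
    exact image_congr fun A hA => (hφ A (powersetCard_mono hT hA)).symm
  have := card_add_three_le_card_image_sum (hσ.mono hT) hk hkT
  rw [hsums] at this
  exact this.trans (Nat.add_le_add_right card_image_le k)

theorem stmt11_general (k r n : ℕ) (hk : 3 ≤ k) (hrn : r < n)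
    (h1 : 2 * (n - r + k - 1) ≤ n)
    (h2 : n ≤ Nat.choose (n - r + k - 1) (k - 1) + (n - r + k - 1)) :
    ∃ E : Finset (Finset (Fin n)), IsPUS n k r E := by
  set m := n - r + k - 1
  have : NeZero m := ⟨by omega⟩
  set X : Finset (Fin n) := {i | i.val < m}
  have hX : #X = m := by rw [Fin.card_filter_val_lt]; omega
  have hσ : Set.InjOn (fun i : Fin n => (i.val : ZMod m)) X := fun i hi j hj hij => by
    simp only [coe_filter, X, mem_univ, true_and, Set.mem_ofPred_eq] at hi hj
    simpa [ZMod.natCast_eq_natCast_iff', Nat.mod_eq_of_lt hi, Nat.mod_eq_of_lt hj, Fin.ext_iff]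
      using hij
  have hXc : #Xᶜ = n - m := by rw [card_compl, Fintype.card_fin, hX]
  obtain ⟨label, hL⟩ := exists_isSpreadLabelling hσ hk (by rw [ZMod.card, hXc]; omega)
    (by rw [hXc, hX]; omega)
  have hr : r + #X = Fintype.card (Fin n) + k - 1 := by rw [hX, Fintype.card_fin]; omega
  exact ⟨_, isPUS_of_nonEdges (nonEdges X k label) (fun S => hL.card_of_mem_nonEdges (by omega))
    (hL.exists_mem_nonEdges (by omega) (by omega))
    (fun Q hQ => hL.exists_nonEdges_subset (by omega))
    (fun S => hL.existsUnique_nonEdges_subset (by omega) hr)⟩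

theorem stmt11 (k r n : ℕ) (hk : 3 ≤ k) (hkr : k < r) (hrn : r < n)
    (h1 : 2 * (n - r + k - 1) ≤ n)
    (h2 : n ≤ Nat.choose (n - r + k - 1) (k - 1) + (n - r + k - 1)) :
    ∃ E : Finset (Finset (Fin n)), IsPUS n k r E :=
  stmt11_general k r n hk hrn h1 h2
end

section
/- Let k ≥ 4 and k+2 ≤ n ≤ (k+2)²/4. Then there exists a primitive uniquely K_{n-1}^{(k)}-saturated hypergraph on n vertices. -/
open Finset

namespace PUS14

lemma mod_inj {t s s' : ℕ} (h : s % t = s' % t) (hle : s ≤ s') (hlt : s' - s < t) : s = s' := by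
  have hd : t ∣ s' - s := (Nat.modEq_iff_dvd' hle).mp h
  have := Nat.eq_zero_of_dvd_of_lt hd hlt
  omega

variable (n m a t : ℕ)

def NE (i : ℕ) : Finset ℕ :=
  ((range m).erase i) ∪ ((Ico (i*a) (i*a+a)).image (fun s => m + s % t))

lemma NE_lt (hmt : m + t = n) (ht : 0 < t) (i : ℕ) : ∀ x ∈ NE m a t i, x < n := by
  intro x hx
  simp only [NE, mem_union, mem_erase, mem_range, mem_image, mem_Ico] at hx
  rcases hx with ⟨_, hx⟩ | ⟨s, _, rfl⟩
  · omega
  · have := Nat.mod_lt s ht; omega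

def edge (hmt : m + t = n) (ht : 0 < t) (i : ℕ) : Finset (Fin n) :=
  (NE m a t i).attachFin (NE_lt n m a t hmt ht i)

lemma mem_edge (hmt : m + t = n) (ht : 0 < t) (i : ℕ) (x : Fin n) :
    x ∈ edge n m a t hmt ht i ↔
      ((x : ℕ) < m ∧ (x : ℕ) ≠ i) ∨ ∃ s, i*a ≤ s ∧ s < i*a + a ∧ (x : ℕ) = m + s % t := by
  simp only [edge, mem_attachFin, NE, mem_union, mem_erase, mem_range, mem_image, mem_Ico]
  constructor
  · rintro (⟨h1, h2⟩ | ⟨s, ⟨hs1, hs2⟩, hs3⟩)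
    · exact Or.inl ⟨h2, h1⟩
    · exact Or.inr ⟨s, hs1, hs2, hs3.symm⟩
  · rintro (⟨h1, h2⟩ | ⟨s, hs1, hs2, hs3⟩)
    · exact Or.inl ⟨h2, h1⟩
    · exact Or.inr ⟨s, ⟨hs1, hs2⟩, hs3.symm⟩

lemma card_edge (hmt : m + t = n) (ht : 0 < t) (hat : a ≤ t) {i : ℕ} (hi : i < m) :
    (edge n m a t hmt ht i).card = m - 1 + a := by
  rw [edge, card_attachFin, NE, card_union_of_disjoint, card_erase_of_mem (mem_range.2 hi),
    card_range]
  · have : ((Ico (i*a) (i*a+a)).image (fun s => m + s % t)).card = a := by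
      rw [card_image_of_injOn, Nat.card_Ico]
      · omega
      · intro s hs s' hs' hss
        simp only [mem_coe, mem_Ico] at hs hs'
        have hss' : m + s % t = m + s' % t := hss
        have h : s % t = s' % t := by omega
        rcases le_total s s' with h1 | h1
        · exact mod_inj h h1 (by omega)
        · exact (mod_inj h.symm h1 (by omega)).symm
    omega
  · rw [disjoint_left]
    intro x hx hx'
    simp only [mem_erase, mem_range] at hx
    simp only [mem_image, mem_Ico] at hx'
    obtain ⟨s, _, rfl⟩ := hx'
    omega


lemma mult_le (ha : 1 ≤ a) (hat : a ≤ t) (hm : 3 ≤ m) (hcap : m*a + 2*t ≤ m*t) (r : ℕ) :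
    ((range m).filter (fun i => ∃ s ∈ Ico (i*a) (i*a + a), s % t = r)).card ≤ m - 2 := by
  obtain ⟨m', rfl⟩ : ∃ m', m = m' + 2 := ⟨m - 2, by omega⟩
  have ht : 0 < t := by omega
  calc ((range (m'+2)).filter _).card
      ≤ ((range m').image (fun q => (q*t + r)/a)).card := by
        apply card_le_card
        intro i hi
        simp only [mem_filter, mem_range, mem_Ico] at hi
        obtain ⟨him, s, ⟨h1, h2⟩, h3⟩ := hi
        have hs : s = t * (s/t) + r := by
          have := Nat.div_add_mod s t; omega
        refine mem_image.2 ⟨s / t, mem_range.2 ?_, ?_⟩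
        · have h4 : i*a + a ≤ (m'+2)*a := by
            have : (i+1)*a ≤ (m'+2)*a := Nat.mul_le_mul_right a (by omega)
            have e : (i+1)*a = i*a + a := by ring
            omega
          have h5 : (m'+2)*a ≤ m'*t := by
            have e : (m'+2)*t = m'*t + 2*t := by ring
            omega
          have h6 : t * (s/t) < t * m' := by
            have : t * (s/t) ≤ s := by omega
            calc t * (s/t) ≤ s := this
              _ < i*a + a := h2
              _ ≤ m'*t := le_trans h4 h5
              _ = t * m' := by ring
          exact Nat.lt_of_mul_lt_mul_left h6
        · have e2 : s / t * t = t * (s / t) := Nat.mul_comm _ _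
          have : (s / t * t + r) = s := by omega
          rw [this]
          have e : (i+1)*a = i*a + a := by ring
          exact Nat.div_eq_of_lt_le h1 (by omega)
    _ ≤ m' := le_trans (card_image_le) (by simp)
    _ ≤ (m'+2) - 2 := by omega

lemma exists_mem (hmt : m + t = n) (ht : 0 < t) (hm : 3 ≤ m) (ha : 1 ≤ a) (htma : t ≤ m*a)
    (x : Fin n) : ∃ i, i < m ∧ x ∈ edge n m a t hmt ht i := by
  rcases lt_or_ge (x : ℕ) m with h | h
  · refine ⟨if (x:ℕ) = 0 then 1 else 0, by split <;> omega, ?_⟩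
    rw [mem_edge]
    exact Or.inl ⟨h, by split <;> omega⟩
  · set r := (x:ℕ) - m with hr'
    have hr : r < t := by have := x.isLt; omega
    refine ⟨r / a, (Nat.div_lt_iff_lt_mul (by omega)).2 (lt_of_lt_of_le hr htma), ?_⟩
    rw [mem_edge]
    right
    refine ⟨r, Nat.div_mul_le_self r a, ?_, ?_⟩
    · have h1 := Nat.div_add_mod r a
      have h2 := Nat.mod_lt r (show 0 < a by omega)
      have e : a * (r/a) = r/a * a := by ring
      omega
    · have : r % t = r := Nat.mod_eq_of_lt hr
      omega

lemma exists_nonedge (hmt : m + t = n) (ht : 0 < t) (hm : 3 ≤ m) (ha : 1 ≤ a) (hat : a ≤ t)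
    (hcap : m*a + 2*t ≤ m*t) (i0 : ℕ) (x : Fin n) (hx : m ≤ (x:ℕ)) :
    ∃ j, j < m ∧ j ≠ i0 ∧ x ∉ edge n m a t hmt ht j := by
  set F := ((range m).filter (fun i => ∃ s ∈ Ico (i*a) (i*a + a), s % t = (x:ℕ) - m)) with hF'
  have hF : F.card ≤ m - 2 := mult_le m a t ha hat hm hcap _
  have hcard : (insert i0 F).card ≤ m - 1 := le_trans (card_insert_le _ _) (by omega)
  have hns : ¬ (range m ⊆ insert i0 F) := by
    intro hsub
    have := card_le_card hsub
    rw [card_range] at this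
    omega
  obtain ⟨j, hj1, hj2⟩ := not_subset.1 hns
  refine ⟨j, mem_range.1 hj1, fun h => hj2 (by simp [h]), fun hmem => ?_⟩
  rw [mem_edge] at hmem
  rcases hmem with ⟨h, _⟩ | ⟨s, h1, h2, h3⟩
  · omega
  · exact hj2 (mem_insert_of_mem (mem_filter.2 ⟨hj1, s, mem_Ico.2 ⟨h1, h2⟩, by omega⟩))


lemma construct (k : ℕ) (hm : 3 ≤ m) (hma : m + a = k + 1) (hmt : m + t = n) (ha : 1 ≤ a)
    (hat : a ≤ t) (htma : t ≤ m * a) (hcap : m*a + 2*t ≤ m*t) :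
    ∃ E : Finset (Finset (Fin n)), IsPUS n k (n-1) E := by
  have ht : 0 < t := by omega
  set S : Finset (Finset (Fin n)) := (range m).image (edge n m a t hmt ht) with hS
  set E : Finset (Finset (Fin n)) :=
    (powersetCard k (univ : Finset (Fin n))).filter (fun T => T ∉ S) with hE
  have memE : ∀ T : Finset (Fin n), T ∈ E ↔ T.card = k ∧ T ∉ S := by
    intro T
    simp only [hE, mem_filter, mem_powersetCard_univ]
  have edge_card : ∀ i < m, (edge n m a t hmt ht i).card = k := by
    intro i hi
    rw [card_edge n m a t hmt ht hat hi]
    omega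
  have edge_memS : ∀ i < m, edge n m a t hmt ht i ∈ S := by
    intro i hi
    exact mem_image_of_mem _ (mem_range.2 hi)
  have hmn : m ≤ n := by omega
  have vtx : ∀ i, i < m → ∀ j, ∀ hj : j < m, i ≠ j →
      (⟨j, lt_of_lt_of_le hj hmn⟩ : Fin n) ∈ edge n m a t hmt ht i := by
    intro i hi j hj hij
    rw [mem_edge]
    exact Or.inl ⟨hj, fun h => hij (by simpa using h.symm)⟩
  have vtx_not : ∀ i, ∀ hi : i < m, (⟨i, lt_of_lt_of_le hi hmn⟩ : Fin n) ∉ edge n m a t hmt ht i := by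
    intro i hi h
    rw [mem_edge] at h
    rcases h with ⟨_, h2⟩ | ⟨s, _, _, h3⟩
    · exact h2 rfl
    · simp only [] at h3
      omega
  have edge_inj : ∀ i < m, ∀ j < m,
      edge n m a t hmt ht i = edge n m a t hmt ht j → i = j := by
    intro i hi j hj hij
    by_contra hne
    have h1 := vtx i hi j hj hne
    rw [hij] at h1
    exact vtx_not j hj h1
  have noclique : ¬ HasClique n k (n-1) E := by
    rintro ⟨Q, hQcard, hQ⟩
    have hc : Qᶜ.card = 1 := by
      rw [card_compl, hQcard, Fintype.card_fin]
      omega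
    obtain ⟨v, hv⟩ := card_eq_one.1 hc
    have hvall : ∀ i < m, v ∈ edge n m a t hmt ht i := by
      intro i hi
      by_contra hvi
      have hsub : edge n m a t hmt ht i ⊆ Q := by
        intro x hx
        by_contra hxQ
        have hx' : x ∈ Qᶜ := mem_compl.2 hxQ
        rw [hv, mem_singleton] at hx'
        exact hvi (hx' ▸ hx)
      have h := hQ _ hsub (edge_card i hi)
      rw [memE] at h
      exact h.2 (edge_memS i hi)
    rcases lt_or_ge (v : ℕ) m with h | h
    · exact vtx_not v.val h (hvall v.val h)
    · obtain ⟨j, hj, _, hnot⟩ := exists_nonedge n m a t hmt ht hm ha hat hcap 0 v h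
      exact hnot (hvall j hj)
  have prim : Primitive n k E := by
    rintro ⟨v, hv⟩
    obtain ⟨i, hi, hvi⟩ := exists_mem n m a t hmt ht hm ha htma v
    have h := hv _ (edge_card i hi) hvi
    rw [memE] at h
    exact h.2 (edge_memS i hi)
  have usat : ∀ S0 : Finset (Fin n), S0.card = k → S0 ∉ E →
      ∃! Q : Finset (Fin n), Q.card = n-1 ∧ ∀ T ⊆ Q, T.card = k → (T ∈ E ∨ T = S0) := by
    intro S0 hS0card hS0E
    have hS0S : S0 ∈ S := by
      by_contra h
      exact hS0E ((memE S0).2 ⟨hS0card, h⟩)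
    obtain ⟨i, hi', hie⟩ := mem_image.1 hS0S
    rw [mem_range] at hi'
    set v : Fin n := ⟨i, by omega⟩ with hvdef
    refine ⟨univ.erase v, ⟨?_, ?_⟩, ?_⟩
    · rw [card_erase_of_mem (mem_univ v), card_univ, Fintype.card_fin]
    · intro T hT hTcard
      by_cases hTS : T ∈ S
      · obtain ⟨j, hj', hje⟩ := mem_image.1 hTS
        rw [mem_range] at hj'
        by_cases hji : j = i
        · right
          rw [← hie, ← hje, hji]
        · exfalso
          have hvT : v ∈ T := by
            rw [← hje]
            exact vtx j hj' i hi' hji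
          have hcontra := hT hvT
          exact (mem_erase.1 hcontra).1 rfl
      · left
        exact (memE T).2 ⟨hTcard, hTS⟩
    · rintro Q ⟨hQcard, hQ⟩
      have hc : Qᶜ.card = 1 := by
        rw [card_compl, hQcard, Fintype.card_fin]
        omega
      obtain ⟨w, hw⟩ := card_eq_one.1 hc
      have hwall : ∀ j < m, j ≠ i → w ∈ edge n m a t hmt ht j := by
        intro j hj hji
        by_contra hwj
        have hsub : edge n m a t hmt ht j ⊆ Q := by
          intro x hx
          by_contra hxQ
          have hx' : x ∈ Qᶜ := mem_compl.2 hxQ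
          rw [hw, mem_singleton] at hx'
          exact hwj (hx' ▸ hx)
        rcases hQ _ hsub (edge_card j hj) with hE' | hEq
        · exact ((memE _).1 hE').2 (edge_memS j hj)
        · exact hji (edge_inj j hj i hi' (hEq.trans hie.symm))
      have hwv : w = v := by
        rcases lt_or_ge (w : ℕ) m with h | h
        · by_cases hwi : (w : ℕ) = i
          · exact Fin.ext hwi
          · exact absurd (hwall w.val h hwi) (vtx_not w.val h)
        · obtain ⟨j, hj, hji, hnot⟩ :=
            exists_nonedge n m a t hmt ht hm ha hat hcap i w h
          exact absurd (hwall j hj hji) hnot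
      have hQc : Qᶜ = {v} := by rw [hw, hwv]
      calc Q = Qᶜᶜ := (compl_compl Q).symm
        _ = ({v} : Finset (Fin n))ᶜ := by rw [hQc]
        _ = univ.erase v := compl_singleton v
  exact ⟨E, fun e he => ((memE e).1 he).1, ⟨noclique, usat⟩, prim⟩


lemma choose_m (k n : ℕ) (hk : 4 ≤ k) (h1 : k + 2 ≤ n) (h2 : 4 * n ≤ (k + 2) ^ 2) :
    ∃ m a t, 3 ≤ m ∧ m + a = k + 1 ∧ m + t = n ∧ 1 ≤ a ∧ a ≤ t ∧ t ≤ m * a ∧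
      m * a + 2 * t ≤ m * t := by
  obtain ⟨d, hd⟩ : ∃ d, k + 2 = 2 * d ∨ k + 2 = 2 * d + 1 := ⟨(k + 2) / 2, by omega⟩
  have hPd : n ≤ d * (k + 2 - d) := by
    rcases hd with hd | hd
    · have h3 : k + 2 - d = d := by omega
      rw [h3]
      nlinarith
    · have h3 : k + 2 - d = d + 1 := by omega
      rw [h3]
      nlinarith
  have hdk : d ≤ k := by omega
  set M := Nat.findGreatest (fun m => n ≤ m * (k + 2 - m)) k with hMdef
  have hdM : d ≤ M := Nat.le_findGreatest hdk hPd
  have hMk : M ≤ k := Nat.findGreatest_le k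
  have hPM : n ≤ M * (k + 2 - M) :=
    Nat.findGreatest_spec (P := fun m => n ≤ m * (k + 2 - m)) hdk hPd
  have hM3 : 3 ≤ M := le_trans (by omega) hdM
  have hgt : M < k → (M + 1) * (k + 1 - M) < n := by
    intro hMk'
    have h4 := Nat.findGreatest_is_greatest (P := fun m => n ≤ m * (k + 2 - m))
      (Nat.lt_succ_self M) (by omega)
    have h4' : ¬ n ≤ (M + 1) * (k + 2 - (M + 1)) := h4
    have e : k + 2 - (M + 1) = k + 1 - M := by omega
    rw [e] at h4'
    omega
  clear_value M
  refine ⟨M, k + 1 - M, n - M, hM3, by omega, by omega, by omega, by omega, ?_, ?_⟩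
  · have e : k + 2 - M = (k + 1 - M) + 1 := by omega
    rw [e, Nat.mul_add, Nat.mul_one] at hPM
    generalize hA : M * (k + 1 - M) = A at *
    omega
  · rcases eq_or_lt_of_le hMk with hMk' | hMk'
    · have e1 : k + 1 - M = 1 := by omega
      rw [e1]
      obtain ⟨U, hU⟩ : ∃ U, n - M = U + 2 := ⟨n - M - 2, by omega⟩
      rw [hU]
      obtain ⟨K, rfl⟩ : ∃ K, M = K + 4 := ⟨M - 4, by omega⟩
      nlinarith [Nat.zero_le (K * U)]
    · have h5 := hgt hMk'
      obtain ⟨B, rfl⟩ : ∃ B, M = B + 3 := ⟨M - 3, by omega⟩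
      obtain ⟨A, hA⟩ : ∃ A, k + 1 - (B + 3) = A + 2 := ⟨k - B - 4, by omega⟩
      obtain ⟨T, hT⟩ : ∃ T, n - (B + 3) = T := ⟨n - (B + 3), rfl⟩
      rw [hA, hT]
      rw [hA] at h5
      have e54 : (B + 3 + 1) * (A + 2) = (B + 4) * (A + 2) := by ring
      rw [e54] at h5
      have hn' : n = T + (B + 3) := by omega
      have h6 : (B + 4) * (A + 2) ≤ B + 2 + T := by omega
      have h7 : (B + 1) * ((B + 4) * (A + 2)) ≤ (B + 1) * (B + 2 + T) :=
        Nat.mul_le_mul_left _ h6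
      have h9 : (B + 1) * (B + 2 + T) = (B + 1) * (B + 2) + (B + 1) * T := by ring
      have h10 : (B + 1) * ((B + 4) * (A + 2)) =
          (B + 3) * (A + 2) + (B + 1) * (B + 2) +
            (A * (B * B) + 4 * (A * B) + A + B * B + 5 * B) := by ring
      have h11 : (B + 3) * T = (B + 1) * T + 2 * T := by ring
      omega

end PUS14

theorem stmt14 (k n : ℕ) (hk : 4 ≤ k) (h1 : k + 2 ≤ n) (h2 : 4 * n ≤ (k + 2) ^ 2) :
    ∃ E : Finset (Finset (Fin n)), IsPUS n k (n - 1) E := by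
  obtain ⟨m, a, t, hm, hma, hmt, ha, hat, htma, hcap⟩ := PUS14.choose_m k n hk h1 h2
  exact PUS14.construct n m a t k hm hma hmt ha hat htma hcap
end

section
/- Let 4 ≤ m ≤ k and let H be the k-uniform hypergraph on vertex set V ⊇ A = [m] with edges e_1,...,e_m, where each e_i contains A ∖ {i} and the sets e_i ∖ A form a (k-m+1)-uniform multihypergraph on V ∖ A with no isolated vertices in which every vertex of V ∖ A belongs to at most m-2 of the sets e_i ∖ A. Then τ(H) ≥ 2, and for each i, the hypergraph H - e_i has {i} as its unique minimum transversal. -/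
open Finset

theorem stmt16 (k m : ℕ) (hm4 : 4 ≤ m) (hmk : m ≤ k)
    (V : Finset ℕ) (hAV : Finset.Icc 1 m ⊆ V)
    (e : ℕ → Finset ℕ)
    (hsub : ∀ i ∈ Finset.Icc 1 m, e i ⊆ V)
    (hcard : ∀ i ∈ Finset.Icc 1 m, (e i).card = k)
    (hinter : ∀ i ∈ Finset.Icc 1 m, e i ∩ Finset.Icc 1 m = (Finset.Icc 1 m).erase i)
    (hinj : ∀ i ∈ Finset.Icc 1 m, ∀ j ∈ Finset.Icc 1 m, e i = e j → i = j)
    (hcover : ∀ v ∈ V \ Finset.Icc 1 m, ∃ i ∈ Finset.Icc 1 m, v ∈ e i)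
    (hdeg : ∀ v ∈ V \ Finset.Icc 1 m,
      ((Finset.Icc 1 m).filter (fun i => v ∈ e i \ Finset.Icc 1 m)).card ≤ m - 2) :
    (∀ T : Finset ℕ, (∀ i ∈ Finset.Icc 1 m, (e i ∩ T).Nonempty) → 2 ≤ T.card) ∧
    (∀ i ∈ Finset.Icc 1 m,
      (∀ j ∈ Finset.Icc 1 m, j ≠ i → (e j ∩ ({i} : Finset ℕ)).Nonempty) ∧
      (∀ T : Finset ℕ, (∀ j ∈ Finset.Icc 1 m, j ≠ i → (e j ∩ T).Nonempty) →
        T.card ≤ 1 → T = {i})) := by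
  set A := Finset.Icc 1 m with hA
  have hAcard : A.card = m := by rw [hA, Nat.card_Icc]; omega
  have hiA : ∀ i ∈ A, ∀ j ∈ A, j ≠ i → i ∈ e j := by
    intro i hi j hj hji
    have h := hinter j hj
    have : i ∈ e j ∩ A := by
      rw [h]; exact Finset.mem_erase.mpr ⟨hji.symm, hi⟩
    exact (Finset.mem_inter.mp this).1
  have key : ∀ i ∈ A, ∀ v : ℕ, (∀ j ∈ A, j ≠ i → v ∈ e j) → v = i := by
    intro i hi v hv
    by_contra hvi
    by_cases hvA : v ∈ A
    · have hvev : v ∈ e v := hv v hvA hvi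
      have : v ∈ e v ∩ A := Finset.mem_inter.mpr ⟨hvev, hvA⟩
      rw [hinter v hvA] at this
      exact (Finset.mem_erase.mp this).1 rfl
    · -- v ∉ A; find j0 ∈ A, j0 ≠ i
      have hi' := Finset.mem_Icc.mp hi
      set j0 : ℕ := if i = 1 then 2 else 1 with hj0
      have hj0A : j0 ∈ A := by
        rw [hA, Finset.mem_Icc, hj0]; split <;> omega
      have hj0i : j0 ≠ i := by rw [hj0]; split <;> omega
      have hvV : v ∈ V := hsub j0 hj0A (hv j0 hj0A hj0i)
      have hvVA : v ∈ V \ A := Finset.mem_sdiff.mpr ⟨hvV, hvA⟩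
      have hfilt : A.erase i ⊆ A.filter (fun j => v ∈ e j \ A) := by
        intro j hj
        obtain ⟨hji, hjA⟩ := Finset.mem_erase.mp hj
        exact Finset.mem_filter.mpr ⟨hjA, Finset.mem_sdiff.mpr ⟨hv j hjA hji, hvA⟩⟩
      have h1 : (A.erase i).card = m - 1 := by
        rw [Finset.card_erase_of_mem hi, hAcard]
      have h2 := Finset.card_le_card hfilt
      have h3 := hdeg v hvVA
      omega
  have h1A : (1 : ℕ) ∈ A := by rw [hA, Finset.mem_Icc]; omega
  have h2A : (2 : ℕ) ∈ A := by rw [hA, Finset.mem_Icc]; omega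
  constructor
  · intro T hT
    by_contra hc
    push_neg at hc
    obtain ⟨x, hx⟩ := hT 1 h1A
    have hxT : x ∈ T := (Finset.mem_inter.mp hx).2
    have hT1 : T.card = 1 := by
      have := Finset.card_pos.mpr ⟨x, hxT⟩
      omega
    obtain ⟨v, hv⟩ := Finset.card_eq_one.mp hT1
    have hvall : ∀ j ∈ A, v ∈ e j := by
      intro j hj
      obtain ⟨y, hy⟩ := hT j hj
      obtain ⟨hy1, hy2⟩ := Finset.mem_inter.mp hy
      rw [hv, Finset.mem_singleton] at hy2
      rwa [hy2] at hy1
    have e1 : v = 1 := key 1 h1A v (fun j hj _ => hvall j hj)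
    have e2 : v = 2 := key 2 h2A v (fun j hj _ => hvall j hj)
    omega
  · intro i hi
    constructor
    · intro j hj hji
      exact ⟨i, Finset.mem_inter.mpr ⟨hiA i hi j hj hji, Finset.mem_singleton_self i⟩⟩
    · intro T hT hTc
      have hi' := Finset.mem_Icc.mp hi
      set j0 : ℕ := if i = 1 then 2 else 1 with hj0
      have hj0A : j0 ∈ A := by
        rw [hA, Finset.mem_Icc, hj0]; split <;> omega
      have hj0i : j0 ≠ i := by rw [hj0]; split <;> omega
      obtain ⟨x, hx⟩ := hT j0 hj0A hj0i
      have hxT : x ∈ T := (Finset.mem_inter.mp hx).2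
      have hT1 : T.card = 1 := by
        have := Finset.card_pos.mpr ⟨x, hxT⟩
        omega
      obtain ⟨v, hv⟩ := Finset.card_eq_one.mp hT1
      have hvall : ∀ j ∈ A, j ≠ i → v ∈ e j := by
        intro j hj hji
        obtain ⟨y, hy⟩ := hT j hj hji
        obtain ⟨hy1, hy2⟩ := Finset.mem_inter.mp hy
        rw [hv, Finset.mem_singleton] at hy2
        rwa [hy2] at hy1
      rw [hv, key i hi v hvall]
end

section
/- If H is a uniquely K_r^(k)-saturated hypergraph with a dominating vertex v, then H - v is a uniquely K_{r-1}^(k)-saturated hypergraph. -/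
open Finset

theorem stmt18 (n k r : ℕ) (hkr : k < r) (hrn : r < n)
    (E : Finset (Finset (Fin n))) (hunif : Uniform n k E)
    (hsat : UniquelySat n k r E)
    (v : Fin n) (hdom : ∀ S : Finset (Fin n), S.card = k → v ∈ S → S ∈ E) :
    (¬ ∃ Q : Finset (Fin n), v ∉ Q ∧ Q.card = r - 1 ∧
        ∀ T ⊆ Q, T.card = k → T ∈ E) ∧
    (∀ S : Finset (Fin n), v ∉ S → S.card = k → S ∉ E →
      ∃! Q : Finset (Fin n), v ∉ Q ∧ Q.card = r - 1 ∧
        ∀ T ⊆ Q, T.card = k → (T ∈ E ∨ T = S)) := by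
  constructor
  · rintro ⟨Q, hvQ, hQcard, hQ⟩
    apply hsat.1
    refine ⟨insert v Q, ?_, ?_⟩
    · rw [card_insert_of_notMem hvQ, hQcard]; omega
    · intro T hT hTk
      by_cases hvT : v ∈ T
      · exact hdom T hTk hvT
      · exact hQ T (fun x hx => (mem_insert.1 (hT hx)).resolve_left
          (fun h => hvT (h ▸ hx))) hTk
  · intro S hvS hSk hSE
    obtain ⟨Q, ⟨hQcard, hQ⟩, hQuniq⟩ := hsat.2 S hSk hSE
    have hvQ : v ∈ Q := by
      by_contra hvQ
      have hQne : Q.Nonempty := by rw [← card_pos, hQcard]; omega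
      obtain ⟨q, hq⟩ := hQne
      have h2 : insert v (Q.erase q) = Q := by
        apply hQuniq
        constructor
        · rw [card_insert_of_notMem (fun h => hvQ (mem_of_mem_erase h)),
            card_erase_of_mem hq, hQcard]; omega
        · intro T hT hTk
          by_cases hvT : v ∈ T
          · exact Or.inl (hdom T hTk hvT)
          · exact hQ T (fun x hx => mem_of_mem_erase
              ((mem_insert.1 (hT hx)).resolve_left (fun h => hvT (h ▸ hx)))) hTk
      exact hvQ (h2 ▸ mem_insert_self v (Q.erase q))
    refine ⟨Q.erase v, ⟨notMem_erase v Q, ?_, ?_⟩, ?_⟩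
    · rw [card_erase_of_mem hvQ, hQcard]
    · intro T hT hTk
      exact hQ T (hT.trans (erase_subset v Q)) hTk
    · rintro P ⟨hvP, hPcard, hP⟩
      have h2 : insert v P = Q := by
        apply hQuniq
        constructor
        · rw [card_insert_of_notMem hvP, hPcard]; omega
        · intro T hT hTk
          by_cases hvT : v ∈ T
          · exact Or.inl (hdom T hTk hvT)
          · exact hP T (fun x hx => (mem_insert.1 (hT hx)).resolve_left
              (fun h => hvT (h ▸ hx))) hTk
      rw [← h2, erase_insert hvP]
end

section
/- Let k ≥ 3, ℓ ≥ 1, and let H be the hypergraph constructed in Theorem 5: vertex set A ∪ B with |A| = ℓ+k-1, B = {b_1,...,b_{u+w}}, where the (k-1)-subsets of A are partitioned into nonempty classes A'_1,...,A'_{u+w} such that no two sets in a class intersect in k-2 elements, and E(H) = ∪_i { F ∪ {b_i} : F ∈ A'_i }. Then τ(H) = ℓ+1, and for each edge e of H, A ∖ e is a transversal of H - e of size ℓ. -/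
open Finset

theorem stmt19 (k ℓ : ℕ) (hk : 3 ≤ k) (hl : 1 ≤ ℓ)
    (A B : Finset ℕ) (hAB : Disjoint A B) (hA : A.card = ℓ + k - 1)
    (cls : Finset ℕ → ℕ)
    (hclsB : ∀ F ⊆ A, F.card = k - 1 → cls F ∈ B)
    (hnonempty : ∀ b ∈ B, ∃ F ⊆ A, F.card = k - 1 ∧ cls F = b)
    (hclass : ∀ F ⊆ A, ∀ G ⊆ A, F.card = k - 1 → G.card = k - 1 →
      cls F = cls G → F ≠ G → (F ∩ G).card ≠ k - 2) :
    (∃ T : Finset ℕ, T.card = ℓ + 1 ∧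
      ∀ F ⊆ A, F.card = k - 1 → ((insert (cls F) F) ∩ T).Nonempty) ∧
    (∀ T : Finset ℕ,
      (∀ F ⊆ A, F.card = k - 1 → ((insert (cls F) F) ∩ T).Nonempty) →
      ℓ + 1 ≤ T.card) ∧
    (∀ F ⊆ A, F.card = k - 1 →
      (A \ insert (cls F) F).card = ℓ ∧
      ∀ G ⊆ A, G.card = k - 1 → insert (cls G) G ≠ insert (cls F) F →
        ((insert (cls G) G) ∩ (A \ insert (cls F) F)).Nonempty) := by
  have hclsA : ∀ F ⊆ A, F.card = k - 1 → cls F ∉ A := by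
    intro F hF hFc hmem
    exact (Finset.disjoint_left.mp hAB hmem) (hclsB F hF hFc)
  refine ⟨?_, ?_, ?_⟩
  · -- upper bound: any (ℓ+1)-subset of A is a transversal
    obtain ⟨T, hTA, hTcard⟩ := Finset.exists_subset_card_eq
      (show ℓ + 1 ≤ A.card by omega)
    refine ⟨T, hTcard, fun F hF hFcard => ?_⟩
    have h1 : (F ∪ T).card ≤ A.card := card_le_card (union_subset hF hTA)
    have h2 : (F ∪ T).card + (F ∩ T).card = F.card + T.card :=
      card_union_add_card_inter F T
    have h3 : (F ∩ T).Nonempty := card_pos.mp (by omega)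
    obtain ⟨x, hx⟩ := h3
    rw [mem_inter] at hx
    exact ⟨x, mem_inter.mpr ⟨mem_insert_of_mem hx.1, hx.2⟩⟩
  · -- lower bound
    intro T hT
    by_contra hlt
    push_neg at hlt
    have hTl : T.card ≤ ℓ := by omega
    set S := A \ T with hSdef
    have hScard : S.card + (A ∩ T).card = A.card := card_sdiff_add_card_inter A T
    have hTa : (A ∩ T).card ≤ T.card := card_le_card inter_subset_right
    obtain ⟨D, hDS, hDcard⟩ := Finset.exists_subset_card_eq
      (show k - 2 ≤ S.card by omega)
    have hSA : S ⊆ A := sdiff_subset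
    -- basic facts about insert x D for x ∈ S \ D
    have hbasic : ∀ x ∈ S \ D, (insert x D) ⊆ A ∧ (insert x D).card = k - 1 ∧
        cls (insert x D) ∈ T \ A := by
      intro x hx
      rw [mem_sdiff] at hx
      have hxS := hx.1
      have hsub : insert x D ⊆ S := insert_subset hxS hDS
      have hsubA : insert x D ⊆ A := hsub.trans hSA
      have hcard : (insert x D).card = k - 1 := by
        rw [card_insert_of_notMem hx.2, hDcard]; omega
      refine ⟨hsubA, hcard, ?_⟩
      obtain ⟨y, hy⟩ := hT (insert x D) hsubA hcard
      rw [mem_inter, mem_insert] at hy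
      rcases hy.1 with h | h
      · subst h
        exact mem_sdiff.mpr ⟨hy.2, hclsA _ hsubA hcard⟩
      · exact absurd (mem_sdiff.mp (hsub h)).2 (fun hc => hc hy.2)
    have hinj : (S \ D).card ≤ (T \ A).card := by
      apply Finset.card_le_card_of_injOn (fun x => cls (insert x D))
        (fun x hx => (hbasic x hx).2.2)
      intro x hx y hy hxy
      by_contra hne
      have hx' := hbasic x (by simpa using hx)
      have hy' := hbasic y (by simpa using hy)
      have hxD : x ∉ D := (mem_sdiff.mp (by simpa using hx)).2
      have hyD : y ∉ D := (mem_sdiff.mp (by simpa using hy)).2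
      have hint : insert x D ∩ insert y D = D := by
        ext z
        simp only [mem_inter, mem_insert]
        constructor
        · rintro ⟨h1 | h1, h2 | h2⟩ <;> first | assumption | (subst h1; tauto) |
            (exfalso; exact hne (h1.trans h2.symm))
        · intro h; exact ⟨Or.inr h, Or.inr h⟩
      have hFG : insert x D ≠ insert y D := by
        intro h
        exact hxD (by have := h ▸ (mem_insert_self x D); rcases mem_insert.mp this with h' | h'
                      exacts [absurd h' hne, h'])
      exact hclass _ hx'.1 _ hy'.1 hx'.2.1 hy'.2.1 hxy hFG (by rw [hint, hDcard])
    have hSD : (S \ D).card = S.card - (k - 2) := by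
      rw [card_sdiff_of_subset hDS, hDcard]
    have hTsplit : (T ∩ A).card + (T \ A).card = T.card := card_inter_add_card_sdiff T A
    have hcomm : (A ∩ T).card = (T ∩ A).card := by rw [inter_comm]
    omega
  · -- third part
    intro F hF hFcard
    have hcA : cls F ∉ A := hclsA F hF hFcard
    have hdiff : A \ insert (cls F) F = A \ F := by
      ext x
      simp only [mem_sdiff, mem_insert]
      constructor
      · rintro ⟨h1, h2⟩; exact ⟨h1, fun h => h2 (Or.inr h)⟩
      · rintro ⟨h1, h2⟩
        exact ⟨h1, fun h => by rcases h with h | h; exacts [hcA (h ▸ h1), h2 h]⟩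
    constructor
    · rw [hdiff, card_sdiff_of_subset hF, hA, hFcard]; omega
    · intro G hG hGcard hne
      have hGF : G ≠ F := by
        intro h; subst h; exact hne rfl
      have hex : (G \ F).Nonempty := by
        rw [sdiff_nonempty]
        intro hsub
        exact hGF (eq_of_subset_of_card_le hsub (by omega))
      obtain ⟨x, hx⟩ := hex
      rw [mem_sdiff] at hx
      refine ⟨x, mem_inter.mpr ⟨mem_insert_of_mem hx.1, ?_⟩⟩
      rw [hdiff, mem_sdiff]
      exact ⟨hG hx.1, hx.2⟩
end
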